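/- arXiv:1910.05426 — 8 statements merged into one kernel-verified Lean document; each statement's English description precedes it below -/
import Mathlib

section
/- Let C ⊆ ℝ^n be a (convex polyhedral) cone and let S(C) denote the linear span of C. For each facet σ of C, choose a half-space H̃_σ = {x ∈ ℝ^n : u_σ·x ≤ 0} (for some u_σ ∈ ℝ^n) such that C ⊆ H̃_σ and {x : u_σ·x = 0} ∩ C = σ. Then C = (⋂_{σ a facet of C} H̃_σ) ∩ S(C). -/
open scoped RealInnerProductSpace

/-- A (convex polyhedral) cone in `ℝ^n`: nonnegative combinations of finitely many vectors. -/
def IsPolyhedralCone {n : ℕ} (C : Set (EuclideanSpace ℝ (Fin n))) : Prop :=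
  ∃ (k : ℕ) (v : Fin k → EuclideanSpace ℝ (Fin n)),
    C = {x | ∃ lam : Fin k → ℝ, (∀ i, 0 ≤ lam i) ∧ x = ∑ i, lam i • v i}

/-- `F` is a face of the cone `C`. -/
def IsFaceOf {n : ℕ} (F C : Set (EuclideanSpace ℝ (Fin n))) : Prop :=
  F = C ∨ ∃ u : EuclideanSpace ℝ (Fin n),
    (∀ x ∈ C, ⟪u, x⟫ ≤ 0) ∧ F = C ∩ {x | ⟪u, x⟫ = 0}

/-- The dimension of a cone: the dimension of its linear span. -/
noncomputable def coneDim {n : ℕ} (C : Set (EuclideanSpace ℝ (Fin n))) : ℕ :=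
  Module.finrank ℝ (Submodule.span ℝ C)

/-- A facet of `C` is a face of dimension `dim C - 1`. -/
def IsFacetOf {n : ℕ} (σ C : Set (EuclideanSpace ℝ (Fin n))) : Prop :=
  IsFaceOf σ C ∧ coneDim σ + 1 = coneDim C

/-- The polar of a cone. -/
def polarCone {n : ℕ} (C : Set (EuclideanSpace ℝ (Fin n))) :
    Set (EuclideanSpace ℝ (Fin n)) :=
  {u | ∀ x ∈ C, ⟪u, x⟫ ≤ 0}

/-- A complete polyhedral fan in `ℝ^n`. -/
def IsCompleteFan {n : ℕ} (𝓕 : Set (Set (EuclideanSpace ℝ (Fin n)))) : Prop :=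
  𝓕.Finite ∧ (∀ C ∈ 𝓕, IsPolyhedralCone C) ∧
    (∀ C ∈ 𝓕, ∀ F, IsFaceOf F C → F ∈ 𝓕) ∧
    (∀ C ∈ 𝓕, ∀ C' ∈ 𝓕, IsFaceOf (C ∩ C') C ∧ IsFaceOf (C ∩ C') C') ∧
    ⋃₀ 𝓕 = Set.univ

/-- Right-hand side of the toric differential inclusion given by `𝓕` and `δ`. -/
noncomputable def toricRHS {n : ℕ} (𝓕 : Set (Set (EuclideanSpace ℝ (Fin n))))
    (δ : ℝ) (X : EuclideanSpace ℝ (Fin n)) : Set (EuclideanSpace ℝ (Fin n)) :=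
  polarCone (⋂₀ {C | C ∈ 𝓕 ∧ Metric.infDist X C ≤ δ})

/-- The quasi-toric differential inclusion given by `𝓕` and `d` is well-defined. -/
def QTDIWellDefined {n : ℕ} (𝓕 : Set (Set (EuclideanSpace ℝ (Fin n))))
    (d : Fin n → ℝ) : Prop :=
  ∀ C ∈ 𝓕, ∀ C' ∈ 𝓕, ∀ X : EuclideanSpace ℝ (Fin n),
    ∀ (hk : coneDim C < n) (hm : coneDim C' < n),
      Metric.infDist X C ≤ d ⟨coneDim C, hk⟩ →
      Metric.infDist X C' ≤ d ⟨coneDim C', hm⟩ →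
      ∃ hh : coneDim (C ∩ C') < n,
        Metric.infDist X (C ∩ C') ≤ d ⟨coneDim (C ∩ C'), hh⟩

/-! ### Auxiliary machinery for the proof -/

section Aux
open Module Submodule

variable {n : ℕ}

/-- The cone generated by a finite family of vectors. -/
private def coneOf {k : ℕ} (v : Fin k → EuclideanSpace ℝ (Fin n)) :
    Set (EuclideanSpace ℝ (Fin n)) :=
  {x | ∃ lam : Fin k → ℝ, (∀ i, 0 ≤ lam i) ∧ x = ∑ i, lam i • v i}

private lemma gen_mem_coneOf {k : ℕ} (v : Fin k → EuclideanSpace ℝ (Fin n)) (i : Fin k) :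
    v i ∈ coneOf v := by
  classical
  refine ⟨fun j => if j = i then 1 else 0, fun j => by positivity, ?_⟩
  simp [ite_smul]

private lemma inner_nonpos_of_gen {k : ℕ} {v : Fin k → EuclideanSpace ℝ (Fin n)}
    {w : EuclideanSpace ℝ (Fin n)} (hw : ∀ i, ⟪w, v i⟫ ≤ 0) :
    ∀ c ∈ coneOf v, ⟪w, c⟫ ≤ 0 := by
  rintro c ⟨lam, hlam, rfl⟩
  rw [inner_sum]
  refine Finset.sum_nonpos fun i _ => ?_
  rw [real_inner_smul_right]
  exact mul_nonpos_of_nonneg_of_nonpos (hlam i) (hw i)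

private lemma inner_zero_of_gen {k : ℕ} {v : Fin k → EuclideanSpace ℝ (Fin n)}
    {w : EuclideanSpace ℝ (Fin n)} (hw : ∀ i, ⟪w, v i⟫ = 0) :
    ∀ c ∈ coneOf v, ⟪w, c⟫ = 0 := by
  rintro c ⟨lam, hlam, rfl⟩
  rw [inner_sum]
  refine Finset.sum_eq_zero fun i _ => ?_
  rw [real_inner_smul_right, hw i, mul_zero]

private lemma span_coneOf {k : ℕ} (v : Fin k → EuclideanSpace ℝ (Fin n)) :
    span ℝ (coneOf v) = span ℝ (Set.range v) := by
  apply le_antisymm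
  · rw [span_le]
    rintro c ⟨lam, hlam, rfl⟩
    exact sum_mem fun i _ => smul_mem _ _ (subset_span ⟨i, rfl⟩)
  · exact span_mono (Set.range_subset_iff.mpr fun i => gen_mem_coneOf v i)

/-- The span of an exposed face is the span of the generators lying on it. -/
private lemma span_face_eq {k : ℕ} {v : Fin k → EuclideanSpace ℝ (Fin n)}
    {w : EuclideanSpace ℝ (Fin n)} (hw : ∀ i, ⟪w, v i⟫ ≤ 0) :
    span ℝ (coneOf v ∩ {p | ⟪w, p⟫ = 0}) = span ℝ (v '' {i | ⟪w, v i⟫ = 0}) := by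
  apply le_antisymm
  · rw [span_le]
    rintro c ⟨⟨lam, hlam, rfl⟩, hc0⟩
    have hc0' : ∑ i, lam i * ⟪w, v i⟫ = 0 := by
      have hsum : ⟪w, ∑ i, lam i • v i⟫ = ∑ i, lam i * ⟪w, v i⟫ := by
        rw [inner_sum]
        exact Finset.sum_congr rfl fun i _ => real_inner_smul_right w (v i) (lam i)
      rw [Set.mem_setOf_eq, hsum] at hc0
      exact hc0
    have hterm : ∀ i ∈ Finset.univ, lam i * ⟪w, v i⟫ = 0 :=
      (Finset.sum_eq_zero_iff_of_nonpos fun i _ =>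
        mul_nonpos_of_nonneg_of_nonpos (hlam i) (hw i)).mp hc0'
    refine sum_mem fun i _ => ?_
    by_cases hi : ⟪w, v i⟫ = 0
    · exact smul_mem _ _ (subset_span ⟨i, hi, rfl⟩)
    · have : lam i = 0 := by
        have := hterm i (Finset.mem_univ i)
        rcases mul_eq_zero.mp this with h | h
        · exact h
        · exact absurd h hi
      rw [this, zero_smul]
      exact zero_mem _
  · refine span_mono ?_
    rintro _ ⟨i, hi, rfl⟩
    exact ⟨gen_mem_coneOf v i, hi⟩

/-- A proper exposed face spans strictly less than the cone. -/
private lemma span_face_lt {k : ℕ} {v : Fin k → EuclideanSpace ℝ (Fin n)}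
    {w : EuclideanSpace ℝ (Fin n)} (hw2 : ∃ c ∈ coneOf v, ⟪w, c⟫ < 0) :
    span ℝ (coneOf v ∩ {p | ⟪w, p⟫ = 0}) < span ℝ (coneOf v) := by
  obtain ⟨c, hcC, hcw⟩ := hw2
  refine lt_of_le_of_ne (span_mono Set.inter_subset_left) fun heq => ?_
  have hle : span ℝ (coneOf v ∩ {p | ⟪w, p⟫ = 0}) ≤ (ℝ ∙ w)ᗮ := by
    rw [span_le]
    rintro p ⟨-, hp⟩
    rw [SetLike.mem_coe, Submodule.mem_orthogonal_singleton_iff_inner_left]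
    rw [real_inner_comm]; exact hp
  have hc : c ∈ (ℝ ∙ w)ᗮ := hle (heq ▸ subset_span hcC)
  rw [Submodule.mem_orthogonal_singleton_iff_inner_left, real_inner_comm] at hc
  rw [hc] at hcw
  exact lt_irrefl 0 hcw

end Aux


private lemma fm_step {n : ℕ} (s : Finset (EuclideanSpace ℝ (Fin n))) (v : EuclideanSpace ℝ (Fin n)) :
    ∃ s' : Finset (EuclideanSpace ℝ (Fin n)),
      {x | ∃ t : ℝ, 0 ≤ t ∧ ∀ w ∈ s, ⟪w, x - t • v⟫ ≤ 0} =
      {x | ∀ w ∈ s', ⟪w, x⟫ ≤ 0} := by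
  classical
  refine ⟨s.filter (fun w => ⟪w, v⟫ ≤ 0) ∪
    ((s.filter (fun w => 0 < ⟪w, v⟫)) ×ˢ (s.filter (fun w => ⟪w, v⟫ < 0))).image
      (fun pq => ⟪pq.1, v⟫ • pq.2 - ⟪pq.2, v⟫ • pq.1), ?_⟩
  ext x
  simp only [Set.mem_setOf_eq, Finset.mem_union, Finset.mem_filter, Finset.mem_image,
    Finset.mem_product]
  constructor
  · rintro ⟨t, ht0, ht⟩ w hw
    rcases hw with ⟨hws, hwv⟩ | ⟨⟨p, q⟩, ⟨⟨hps, hpv⟩, ⟨hqs, hqv⟩⟩, rfl⟩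
    · have := ht w hws
      rw [inner_sub_right, real_inner_smul_right] at this
      nlinarith
    · have hp := ht p hps
      have hq := ht q hqs
      rw [inner_sub_right, real_inner_smul_right] at hp hq
      rw [inner_sub_left, real_inner_smul_left, real_inner_smul_left]
      nlinarith
  · intro hx
    by_cases hN : (s.filter (fun w => ⟪w, v⟫ < 0)).Nonempty
    · obtain ⟨q0, hq0, hq0min⟩ := (s.filter (fun w => ⟪w, v⟫ < 0)).exists_min_image
        (fun q => ⟪q, x⟫ / ⟪q, v⟫) hN
      rw [Finset.mem_filter] at hq0
      have hq0x : ⟪q0, x⟫ ≤ 0 := hx q0 (Or.inl ⟨hq0.1, le_of_lt hq0.2⟩)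
      refine ⟨⟪q0, x⟫ / ⟪q0, v⟫, div_nonneg_iff.mpr (Or.inr ⟨hq0x, hq0.2.le⟩), ?_⟩
      intro w hws
      rw [inner_sub_right, real_inner_smul_right]
      rcases lt_trichotomy ⟪w, v⟫ 0 with hwv | hwv | hwv
      · have hmin := hq0min w (Finset.mem_filter.mpr ⟨hws, hwv⟩)
        have h1 : ⟪w, x⟫ / ⟪w, v⟫ * ⟪w, v⟫ = ⟪w, x⟫ := div_mul_cancel₀ _ (ne_of_lt hwv)
        nlinarith [mul_le_mul_of_nonpos_right hmin (le_of_lt hwv)]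
      · have h2 : ⟪w, x⟫ ≤ 0 := hx w (Or.inl ⟨hws, le_of_eq hwv⟩)
        rw [hwv]; linarith
      · have hpair := hx (⟪w, v⟫ • q0 - ⟪q0, v⟫ • w)
          (Or.inr ⟨⟨w, q0⟩, ⟨⟨hws, hwv⟩, ⟨hq0.1, hq0.2⟩⟩, rfl⟩)
        rw [inner_sub_left, real_inner_smul_left, real_inner_smul_left] at hpair
        have h1 : ⟪q0, x⟫ / ⟪q0, v⟫ * ⟪q0, v⟫ = ⟪q0, x⟫ := div_mul_cancel₀ _ (ne_of_lt hq0.2)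
        nlinarith
    · by_cases hP : (s.filter (fun w => 0 < ⟪w, v⟫)).Nonempty
      · obtain ⟨p0, hp0, hp0max⟩ := (s.filter (fun w => 0 < ⟪w, v⟫)).exists_max_image
          (fun p => ⟪p, x⟫ / ⟪p, v⟫) hP
        refine ⟨max 0 (⟪p0, x⟫ / ⟪p0, v⟫), le_max_left _ _, ?_⟩
        intro w hws
        rw [inner_sub_right, real_inner_smul_right]
        rcases lt_trichotomy ⟪w, v⟫ 0 with hwv | hwv | hwv
        · exact (hN ⟨w, Finset.mem_filter.mpr ⟨hws, hwv⟩⟩).elim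
        · have h2 : ⟪w, x⟫ ≤ 0 := hx w (Or.inl ⟨hws, le_of_eq hwv⟩)
          rw [hwv]; nlinarith [le_max_left (0:ℝ) (⟪p0, x⟫ / ⟪p0, v⟫)]
        · have hmax := hp0max w (Finset.mem_filter.mpr ⟨hws, hwv⟩)
          have h2 : ⟪w, x⟫ / ⟪w, v⟫ ≤ max 0 (⟪p0, x⟫ / ⟪p0, v⟫) :=
            le_trans hmax (le_max_right _ _)
          rw [div_le_iff₀ hwv] at h2
          linarith
      · refine ⟨0, le_refl 0, ?_⟩
        intro w hws
        rcases lt_trichotomy ⟪w, v⟫ 0 with hwv | hwv | hwv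
        · exact (hN ⟨w, Finset.mem_filter.mpr ⟨hws, hwv⟩⟩).elim
        · have h2 : ⟪w, x⟫ ≤ 0 := hx w (Or.inl ⟨hws, le_of_eq hwv⟩)
          rw [inner_sub_right, real_inner_smul_right, hwv]; linarith
        · exact (hP ⟨w, Finset.mem_filter.mpr ⟨hws, hwv⟩⟩).elim

private lemma hrep {n : ℕ} (k : ℕ) (v : Fin k → EuclideanSpace ℝ (Fin n)) :
    ∃ s : Finset (EuclideanSpace ℝ (Fin n)),
      {x | ∃ lam : Fin k → ℝ, (∀ i, 0 ≤ lam i) ∧ x = ∑ i, lam i • v i} =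
      {x | ∀ w ∈ s, ⟪w, x⟫ ≤ 0} := by
  classical
  induction k with
  | zero =>
    refine ⟨(Finset.univ.image fun i => EuclideanSpace.single i (1:ℝ)) ∪
      (Finset.univ.image fun i => EuclideanSpace.single i (-1:ℝ)), ?_⟩
    ext x
    simp only [Set.mem_setOf_eq, Finset.mem_union, Finset.mem_image, Finset.mem_univ,
      true_and]
    constructor
    · rintro ⟨lam, -, rfl⟩ w hw
      rw [Finset.univ_eq_empty, Finset.sum_empty]
      rcases hw with ⟨i, rfl⟩ | ⟨i, rfl⟩ <;> simp
    · intro hx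
      refine ⟨Fin.elim0, fun i => i.elim0, ?_⟩
      rw [Finset.univ_eq_empty, Finset.sum_empty]
      ext i
      have h1 := hx (EuclideanSpace.single i (1:ℝ)) (Or.inl ⟨i, rfl⟩)
      have h2 := hx (EuclideanSpace.single i (-1:ℝ)) (Or.inr ⟨i, rfl⟩)
      rw [EuclideanSpace.inner_single_left] at h1 h2
      simp only [map_one, one_mul, map_neg, neg_mul, neg_nonpos] at h1 h2
      have hxi : x i = 0 := le_antisymm h1 (by linarith)
      simpa using hxi
  | succ k ih =>
    obtain ⟨s, hs⟩ := ih (fun i => v i.castSucc)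
    obtain ⟨s', hs'⟩ := fm_step s (v (Fin.last k))
    refine ⟨s', ?_⟩
    rw [← hs']
    ext x
    simp only [Set.mem_setOf_eq]
    constructor
    · rintro ⟨lam, hlam, rfl⟩
      refine ⟨lam (Fin.last k), hlam _, ?_⟩
      have : (∑ i, lam i • v i) - lam (Fin.last k) • v (Fin.last k) =
          ∑ i : Fin k, lam i.castSucc • v i.castSucc := by
        rw [Fin.sum_univ_castSucc]; abel
      rw [this]
      have hmem : (∑ i : Fin k, lam i.castSucc • v i.castSucc) ∈
          {x | ∀ w ∈ s, ⟪w, x⟫ ≤ 0} := by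
        rw [← hs]
        exact ⟨fun i => lam i.castSucc, fun i => hlam _, rfl⟩
      exact hmem
    · rintro ⟨t, ht0, ht⟩
      have hmem : x - t • v (Fin.last k) ∈
          {x | ∃ lam : Fin k → ℝ, (∀ i, 0 ≤ lam i) ∧ x = ∑ i, lam i • v i.castSucc} := by
        rw [show {x | ∃ lam : Fin k → ℝ, (∀ i, 0 ≤ lam i) ∧ x = ∑ i, lam i • v i.castSucc} =
          {x | ∀ w ∈ s, ⟪w, x⟫ ≤ 0} from hs]
        exact ht
      obtain ⟨lam, hlam, hx⟩ := hmem
      refine ⟨Fin.snoc lam t, ?_, ?_⟩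
      · intro i
        induction i using Fin.lastCases with
        | last => simpa using ht0
        | cast j => simpa using hlam j
      · rw [Fin.sum_univ_castSucc]
        simp only [Fin.snoc_castSucc, Fin.snoc_last]
        rw [← hx]
        abel

section Rot
open Module Submodule

variable {n : ℕ}

/-- Every proper exposed face of a polyhedral cone is contained in a facet. -/
private lemma face_subset_facet_aux {k : ℕ} (v : Fin k → EuclideanSpace ℝ (Fin n)) :
    ∀ m : ℕ, ∀ w : EuclideanSpace ℝ (Fin n),
      (∀ c ∈ coneOf v, ⟪w, c⟫ ≤ 0) → (∃ c ∈ coneOf v, ⟪w, c⟫ < 0) →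
      finrank ℝ (span ℝ (coneOf v)) ≤
        m + 1 + finrank ℝ (span ℝ (coneOf v ∩ {p | ⟪w, p⟫ = 0})) →
      ∃ σ, IsFacetOf σ (coneOf v) ∧ coneOf v ∩ {p | ⟪w, p⟫ = 0} ⊆ σ := by
  intro m
  induction m with
  | zero =>
    intro w hw1 hw2 hdim
    have hlt := span_face_lt (v := v) (w := w) hw2
    have hlt' := finrank_lt_finrank_of_lt hlt
    refine ⟨coneOf v ∩ {p | ⟪w, p⟫ = 0}, ⟨Or.inr ⟨w, hw1, rfl⟩, ?_⟩, le_refl _⟩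
    show finrank ℝ (span ℝ (coneOf v ∩ {p | ⟪w, p⟫ = 0})) + 1 = finrank ℝ (span ℝ (coneOf v))
    omega
  | succ m ih =>
    intro w hw1 hw2 hdim
    have hlt := span_face_lt (v := v) (w := w) hw2
    have hlt' := finrank_lt_finrank_of_lt hlt
    set e := finrank ℝ (span ℝ (coneOf v ∩ {p | ⟪w, p⟫ = 0})) with he
    set d := finrank ℝ (span ℝ (coneOf v)) with hd
    by_cases hcase : d = e + 1
    · refine ⟨coneOf v ∩ {p | ⟪w, p⟫ = 0}, ⟨Or.inr ⟨w, hw1, rfl⟩, hcase.symm⟩, le_refl _⟩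
    -- rotation step
    have hw_gen : ∀ i, ⟪w, v i⟫ ≤ 0 := fun i => hw1 _ (gen_mem_coneOf v i)
    have hwne : w ≠ 0 := by
      rintro rfl
      obtain ⟨c, -, hc⟩ := hw2
      rw [inner_zero_left] at hc
      exact lt_irrefl 0 hc
    set L := span ℝ (v '' {i | ⟪w, v i⟫ = 0}) with hLdef
    have hL : span ℝ (coneOf v ∩ {p | ⟪w, p⟫ = 0}) = L := span_face_eq hw_gen
    set M := L ⊔ (ℝ ∙ w) with hMdef
    have hMrank : finrank ℝ M ≤ e + 1 := by
      have h1 : finrank ℝ M + finrank ℝ ↥(L ⊓ (ℝ ∙ w)) =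
          finrank ℝ L + finrank ℝ ↥(ℝ ∙ w) :=
        Submodule.finrank_sup_add_finrank_inf_eq L (ℝ ∙ w)
      have h2 : finrank ℝ ↥(ℝ ∙ w) = 1 := finrank_span_singleton hwne
      have h3 : finrank ℝ L = e := by rw [he, hL]
      omega
    set W := span ℝ (coneOf v) with hWdef
    have hWrange : W = span ℝ (Set.range v) := span_coneOf v
    have hrank2 : 0 < finrank ℝ ↥(Mᗮ ⊓ W) := by
      have h1 := Submodule.finrank_sup_add_finrank_inf_eq Mᗮ W
      have h2 := M.finrank_add_finrank_orthogonal
      have h3 : finrank ℝ ↥(Mᗮ ⊔ W) ≤ n := by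
        refine le_trans (Submodule.finrank_le _) (le_of_eq ?_)
        exact finrank_euclideanSpace_fin
      have h4 : finrank ℝ (EuclideanSpace ℝ (Fin n)) = n := finrank_euclideanSpace_fin
      omega
    obtain ⟨u₀, hu₀mem, hu₀ne⟩ : ∃ x ∈ Mᗮ ⊓ W, x ≠ 0 := by
      rw [← Submodule.ne_bot_iff]
      intro hbot
      rw [hbot, finrank_bot] at hrank2
      exact lt_irrefl 0 hrank2
    -- the key construction, for a suitable sign of u
    have key : ∀ u₁ : EuclideanSpace ℝ (Fin n), u₁ ∈ Mᗮ → u₁ ∈ W → u₁ ≠ 0 →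
        (∃ i, 0 < ⟪u₁, v i⟫) →
        ∃ σ, IsFacetOf σ (coneOf v) ∧ coneOf v ∩ {p | ⟪w, p⟫ = 0} ⊆ σ := by
      intro u huM huW hune ⟨i₀, hi₀⟩
      classical
      have huw : ⟪w, u⟫ = 0 := huM w (Submodule.mem_sup_right (Submodule.mem_span_singleton_self w))
      have huA : ∀ i, ⟪w, v i⟫ = 0 → ⟪u, v i⟫ = 0 := by
        intro i hi
        have : v i ∈ M := Submodule.mem_sup_left (subset_span ⟨i, hi, rfl⟩)
        rw [real_inner_comm]
        exact huM _ this
      set P := Finset.univ.filter (fun i => 0 < ⟪u, v i⟫) with hPdef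
      have hPne : P.Nonempty := ⟨i₀, Finset.mem_filter.mpr ⟨Finset.mem_univ _, hi₀⟩⟩
      obtain ⟨i₁, hi₁P, hi₁min⟩ := P.exists_min_image (fun i => -⟪w, v i⟫ / ⟪u, v i⟫) hPne
      have hi₁u : 0 < ⟪u, v i₁⟫ := (Finset.mem_filter.mp hi₁P).2
      have hi₁w : ⟪w, v i₁⟫ < 0 := by
        rcases lt_or_eq_of_le (hw_gen i₁) with h | h
        · exact h
        · exact absurd (huA i₁ h) (ne_of_gt hi₁u)
      set θ := -⟪w, v i₁⟫ / ⟪u, v i₁⟫ with hθdef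
      have hθpos : 0 < θ := div_pos (by linarith) hi₁u
      set w' := w + θ • u with hw'def
      have hinner : ∀ p, ⟪w', p⟫ = ⟪w, p⟫ + θ * ⟪u, p⟫ := by
        intro p
        rw [hw'def, inner_add_left, real_inner_smul_left]
      have hgen' : ∀ i, ⟪w', v i⟫ ≤ 0 := by
        intro i
        rw [hinner]
        by_cases hui : 0 < ⟪u, v i⟫
        · have hmin := hi₁min i (Finset.mem_filter.mpr ⟨Finset.mem_univ _, hui⟩)
          rw [le_div_iff₀ hui] at hmin
          linarith
        · push_neg at hui
          nlinarith [hw_gen i]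
      have heq₁ : ⟪w', v i₁⟫ = 0 := by
        rw [hinner]
        have : θ * ⟪u, v i₁⟫ = -⟪w, v i₁⟫ := div_mul_cancel₀ _ (ne_of_gt hi₁u)
        linarith
      have hw1' : ∀ c ∈ coneOf v, ⟪w', c⟫ ≤ 0 := inner_nonpos_of_gen hgen'
      have hw2' : ∃ c ∈ coneOf v, ⟪w', c⟫ < 0 := by
        by_contra hcon
        push_neg at hcon
        have hzero : ∀ i, ⟪w', v i⟫ = 0 :=
          fun i => le_antisymm (hgen' i) (hcon _ (gen_mem_coneOf v i))
        have hWle : W ≤ (ℝ ∙ w')ᗮ := by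
          rw [hWrange, span_le]
          rintro _ ⟨i, rfl⟩
          rw [SetLike.mem_coe, Submodule.mem_orthogonal_singleton_iff_inner_left,
            real_inner_comm]
          exact hzero i
        have : ⟪u, w'⟫ = 0 := by
          have := hWle huW
          rwa [Submodule.mem_orthogonal_singleton_iff_inner_left] at this
        rw [real_inner_comm, hinner] at this
        have huu : 0 < ⟪u, u⟫ :=
          lt_of_le_of_ne real_inner_self_nonneg (Ne.symm fun hh => hune (inner_self_eq_zero.mp hh))
        nlinarith
      have hFF' : coneOf v ∩ {p | ⟪w, p⟫ = 0} ⊆ coneOf v ∩ {p | ⟪w', p⟫ = 0} := by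
        rintro p ⟨hpC, hp0⟩
        refine ⟨hpC, ?_⟩
        have hpL : p ∈ L := by
          rw [← hL]
          exact subset_span ⟨hpC, hp0⟩
        have hpu : ⟪u, p⟫ = 0 := by
          rw [real_inner_comm]
          exact huM p (Submodule.mem_sup_left hpL)
        show ⟪w', p⟫ = 0
        rw [hinner, hp0, hpu]
        ring
      have hspan_lt : span ℝ (coneOf v ∩ {p | ⟪w, p⟫ = 0}) <
          span ℝ (coneOf v ∩ {p | ⟪w', p⟫ = 0}) := by
        refine lt_of_le_of_ne (span_mono hFF') fun heq => ?_
        have hv₁ : v i₁ ∈ span ℝ (coneOf v ∩ {p | ⟪w', p⟫ = 0}) :=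
          subset_span ⟨gen_mem_coneOf v i₁, heq₁⟩
        rw [← heq, hL] at hv₁
        -- v i₁ ∈ L but ⟪w, v i₁⟫ < 0, while L ⊥ w
        have hLperp : L ≤ (ℝ ∙ w)ᗮ := by
          rw [hLdef, span_le]
          rintro _ ⟨i, hi, rfl⟩
          rw [SetLike.mem_coe, Submodule.mem_orthogonal_singleton_iff_inner_left,
            real_inner_comm]
          exact hi
        have := hLperp hv₁
        rw [Submodule.mem_orthogonal_singleton_iff_inner_left, real_inner_comm] at this
        rw [this] at hi₁w
        exact lt_irrefl 0 hi₁w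
      have hrank' : e + 1 ≤ finrank ℝ (span ℝ (coneOf v ∩ {p | ⟪w', p⟫ = 0})) := by
        have := finrank_lt_finrank_of_lt hspan_lt
        omega
      obtain ⟨σ, hσ, hsub⟩ := ih w' hw1' hw2' (by omega)
      exact ⟨σ, hσ, hFF'.trans hsub⟩
    have huWmem : u₀ ∈ W := hu₀mem.2
    have huMmem : u₀ ∈ Mᗮ := hu₀mem.1
    have hex : ∃ i, ⟪u₀, v i⟫ ≠ 0 := by
      by_contra hcon
      push_neg at hcon
      have hWle : W ≤ (ℝ ∙ u₀)ᗮ := by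
        rw [hWrange, span_le]
        rintro _ ⟨i, rfl⟩
        rw [SetLike.mem_coe, Submodule.mem_orthogonal_singleton_iff_inner_left,
          real_inner_comm]
        exact hcon i
      have := hWle huWmem
      rw [Submodule.mem_orthogonal_singleton_iff_inner_left] at this
      exact hu₀ne (inner_self_eq_zero.mp this)
    obtain ⟨i₀, hi₀⟩ := hex
    rcases hi₀.lt_or_gt with h | h
    · refine key (-u₀) (Submodule.neg_mem _ huMmem) (Submodule.neg_mem _ huWmem)
        (neg_ne_zero.mpr hu₀ne) ⟨i₀, ?_⟩
      rw [inner_neg_left]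
      linarith
    · exact key u₀ huMmem huWmem hu₀ne ⟨i₀, h⟩

end Rot

section Main
open Module Submodule

/-- A cone is the intersection of the half-spaces chosen for its facets,
intersected with its linear span. -/
theorem cone_eq_inter_facet_halfspaces_inter_span {n : ℕ}
    (C : Set (EuclideanSpace ℝ (Fin n))) (hC : IsPolyhedralCone C)
    (u : Set (EuclideanSpace ℝ (Fin n)) → EuclideanSpace ℝ (Fin n))
    (hu_half : ∀ σ, IsFacetOf σ C → ∀ x ∈ C, ⟪u σ, x⟫ ≤ 0)
    (hu_face : ∀ σ, IsFacetOf σ C → {x | ⟪u σ, x⟫ = 0} ∩ C = σ) :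
    C = (⋂ σ ∈ {σ | IsFacetOf σ C}, {x | ⟪u σ, x⟫ ≤ 0}) ∩
        (Submodule.span ℝ C : Set (EuclideanSpace ℝ (Fin n))) := by
  classical
  obtain ⟨k, v, hCv⟩ := hC
  have hC' : C = coneOf v := hCv
  subst hC'
  apply Set.Subset.antisymm
  · intro x hx
    exact ⟨Set.mem_iInter₂.mpr fun σ hσ => hu_half σ hσ x hx, Submodule.subset_span hx⟩
  · rintro x ⟨hx1, hx2⟩
    by_contra hxC
    obtain ⟨s, hs'⟩ := hrep k v
    have hs : coneOf v = {x | ∀ w ∈ s, ⟪w, x⟫ ≤ 0} := hs'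
    set z : EuclideanSpace ℝ (Fin n) := ∑ i, v i with hzdef
    have hzC : z ∈ coneOf v := ⟨fun _ => 1, fun _ => zero_le_one, by rw [hzdef]; simp⟩
    have hzs : ∀ w ∈ s, ⟪w, z⟫ ≤ 0 := by
      have := hzC; rw [hs] at this; exact this
    -- the sum of the generators lies on no facet
    have hz : ∀ σ, IsFacetOf σ (coneOf v) → ⟪u σ, z⟫ < 0 := by
      intro σ hσ
      have hsum : ⟪u σ, z⟫ = ∑ i, ⟪u σ, v i⟫ := by rw [hzdef, inner_sum]
      have hterm : ∀ i ∈ Finset.univ, ⟪u σ, v i⟫ ≤ 0 :=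
        fun i _ => hu_half σ hσ (v i) (gen_mem_coneOf v i)
      have hle : ∑ i, ⟪u σ, v i⟫ ≤ 0 := Finset.sum_nonpos hterm
      rw [hsum]
      rcases lt_or_eq_of_le hle with h | h
      · exact h
      · exfalso
        have hall : ∀ i ∈ Finset.univ, ⟪u σ, v i⟫ = 0 :=
          (Finset.sum_eq_zero_iff_of_nonpos hterm).mp h
        have hzero : ∀ c ∈ coneOf v, ⟪u σ, c⟫ = 0 :=
          inner_zero_of_gen fun i => hall i (Finset.mem_univ i)
        have hσC : σ = coneOf v := by
          rw [← hu_face σ hσ]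
          ext p
          exact ⟨fun hp => hp.2, fun hp => ⟨hzero p hp, hp⟩⟩
        have h2 := hσ.2
        rw [hσC] at h2
        omega
    -- a violated constraint and the exit point of the segment from z to x
    have hxs : ∃ w ∈ s, 0 < ⟪w, x⟫ := by
      by_contra hcon
      push_neg at hcon
      exact hxC (by rw [hs]; exact fun w hw => hcon w hw)
    obtain ⟨w₂, hw₂s, hw₂x⟩ := hxs
    have hBne : (s.filter (fun w => 0 < ⟪w, x⟫)).Nonempty :=
      ⟨w₂, Finset.mem_filter.mpr ⟨hw₂s, hw₂x⟩⟩
    obtain ⟨w₁, hw₁B, hw₁min⟩ := (s.filter (fun w => 0 < ⟪w, x⟫)).exists_min_image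
      (fun w => -⟪w, z⟫ / (⟪w, x⟫ - ⟪w, z⟫)) hBne
    have hw₁s : w₁ ∈ s := (Finset.mem_filter.mp hw₁B).1
    have hw₁x : 0 < ⟪w₁, x⟫ := (Finset.mem_filter.mp hw₁B).2
    have hw₁z : ⟪w₁, z⟫ ≤ 0 := hzs w₁ hw₁s
    set t := -⟪w₁, z⟫ / (⟪w₁, x⟫ - ⟪w₁, z⟫) with htdef
    have hden : 0 < ⟪w₁, x⟫ - ⟪w₁, z⟫ := by linarith
    have ht0 : 0 ≤ t := div_nonneg (by linarith) hden.le
    have ht1 : t < 1 := by rw [htdef, div_lt_one hden]; linarith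
    set y := z + t • (x - z) with hydef
    have hinner_y : ∀ p, ⟪p, y⟫ = ⟪p, z⟫ + t * (⟪p, x⟫ - ⟪p, z⟫) := by
      intro p
      rw [hydef, inner_add_right, real_inner_smul_right, inner_sub_right]
    have hyC : y ∈ coneOf v := by
      rw [hs]
      intro w hw
      rw [hinner_y]
      by_cases hwx : 0 < ⟪w, x⟫
      · have hmin : t ≤ -⟪w, z⟫ / (⟪w, x⟫ - ⟪w, z⟫) :=
          hw₁min w (Finset.mem_filter.mpr ⟨hw, hwx⟩)
        have hdw : 0 < ⟪w, x⟫ - ⟪w, z⟫ := by have := hzs w hw; linarith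
        have := (le_div_iff₀ hdw).mp hmin
        linarith
      · push_neg at hwx
        have hwz := hzs w hw
        nlinarith
    have hy0 : ⟪w₁, y⟫ = 0 := by
      rw [hinner_y]
      have : t * (⟪w₁, x⟫ - ⟪w₁, z⟫) = -⟪w₁, z⟫ := div_mul_cancel₀ _ (ne_of_gt hden)
      linarith
    have hsupp : ∀ c ∈ coneOf v, ⟪w₁, c⟫ ≤ 0 := by
      intro c hc
      rw [hs] at hc
      exact hc w₁ hw₁s
    have hprop : ∃ c ∈ coneOf v, ⟪w₁, c⟫ < 0 := by
      by_contra hcon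
      push_neg at hcon
      have hzero : ∀ c ∈ coneOf v, ⟪w₁, c⟫ = 0 :=
        fun c hc => le_antisymm (hsupp c hc) (hcon c hc)
      have hWle : Submodule.span ℝ (coneOf v) ≤ (ℝ ∙ w₁)ᗮ := by
        rw [Submodule.span_le]
        intro c hc
        rw [SetLike.mem_coe, Submodule.mem_orthogonal_singleton_iff_inner_left,
          real_inner_comm]
        exact hzero c hc
      have hx0 := hWle hx2
      rw [Submodule.mem_orthogonal_singleton_iff_inner_left, real_inner_comm] at hx0
      rw [hx0] at hw₁x
      exact lt_irrefl 0 hw₁x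
    obtain ⟨σ, hσ, hsub⟩ := face_subset_facet_aux v
      (finrank ℝ (Submodule.span ℝ (coneOf v))) w₁ hsupp hprop (by omega)
    have hyσ : y ∈ σ := hsub ⟨hyC, hy0⟩
    have hyu : ⟪u σ, y⟫ = 0 := by
      rw [← hu_face σ hσ] at hyσ
      exact hyσ.1
    have h1 : ⟪u σ, z⟫ < 0 := hz σ hσ
    have h2 : ⟪u σ, x⟫ ≤ 0 := Set.mem_iInter₂.mp hx1 σ hσ
    rw [hinner_y] at hyu
    nlinarith [mul_pos (sub_pos.mpr ht1) (neg_pos.mpr h1), mul_nonneg ht0 (neg_nonneg.mpr h2)]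

end Main
end

section
/- Let C_i and C_j be (convex polyhedral) cones in ℝ^n such that C_i ∩ C_j is a face of both C_i and C_j. Then the set C_i ∪ C_j is convex along the linear span of C_i ∩ C_j: for any a, b ∈ C_i ∪ C_j with b − a ∈ span(C_i ∩ C_j), the line segment [a, b] is contained in C_i ∪ C_j (equivalently, either a, b ∈ C_i or a, b ∈ C_j). -/
open scoped RealInnerProductSpace

lemma polyCone_props {n : ℕ} {C : Set (EuclideanSpace ℝ (Fin n))}
    (h : IsPolyhedralCone C) :
    (0 : EuclideanSpace ℝ (Fin n)) ∈ C ∧ (∀ x ∈ C, ∀ y ∈ C, x + y ∈ C) ∧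
      (∀ c : ℝ, 0 ≤ c → ∀ x ∈ C, c • x ∈ C) := by
  obtain ⟨k, v, rfl⟩ := h
  refine ⟨⟨0, fun i => le_refl 0, by simp⟩, ?_, ?_⟩
  · rintro x ⟨l1, hl1, rfl⟩ y ⟨l2, hl2, rfl⟩
    exact ⟨l1 + l2, fun i => add_nonneg (hl1 i) (hl2 i), by
      simp [add_smul, Finset.sum_add_distrib]⟩
  · rintro c hc x ⟨l, hl, rfl⟩
    exact ⟨c • l, fun i => mul_nonneg hc (hl i), by
      simp [Finset.smul_sum, smul_smul]⟩

lemma span_diff {n : ℕ} {S : Set (EuclideanSpace ℝ (Fin n))}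
    (h0 : (0 : EuclideanSpace ℝ (Fin n)) ∈ S)
    (hadd : ∀ x ∈ S, ∀ y ∈ S, x + y ∈ S)
    (hsmul : ∀ c : ℝ, 0 ≤ c → ∀ x ∈ S, c • x ∈ S) :
    ∀ w ∈ Submodule.span ℝ S, ∃ p ∈ S, ∃ q ∈ S, w = p - q := by
  intro w hw
  induction hw using Submodule.span_induction with
  | mem x hx => exact ⟨x, hx, 0, h0, by simp⟩
  | zero => exact ⟨0, h0, 0, h0, by simp⟩
  | add x y _ _ hx hy =>
      obtain ⟨p, hp, q, hq, rfl⟩ := hx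
      obtain ⟨p', hp', q', hq', rfl⟩ := hy
      exact ⟨p + p', hadd _ hp _ hp', q + q', hadd _ hq _ hq', by abel⟩
  | smul c x _ hx =>
      obtain ⟨p, hp, q, hq, rfl⟩ := hx
      rcases le_or_gt 0 c with h | h
      · exact ⟨c • p, hsmul c h _ hp, c • q, hsmul c h _ hq, by module⟩
      · exact ⟨(-c) • q, hsmul _ (by linarith) _ hq,
          (-c) • p, hsmul _ (by linarith) _ hp, by module⟩

lemma face_absorb {n : ℕ} {C D : Set (EuclideanSpace ℝ (Fin n))}
    (h : IsFaceOf (C ∩ D) C) {a p : EuclideanSpace ℝ (Fin n)}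
    (ha : a ∈ C) (hp : p ∈ C ∩ D) (hap : a + p ∈ C ∩ D) : a ∈ D := by
  rcases h with h | ⟨u, hu, hF⟩
  · exact (show a ∈ C ∩ D by rw [h]; exact ha).2
  · have h1 : ⟪u, a⟫ ≤ 0 := hu a ha
    have h2 : ⟪u, p⟫ ≤ 0 := hu p hp.1
    have h3 : ⟪u, a + p⟫ = 0 := by
      have h4 : a + p ∈ C ∩ {x | ⟪u, x⟫ = 0} := hF ▸ hap
      exact h4.2
    have h5 : ⟪u, a⟫ = 0 := by
      rw [inner_add_right] at h3; linarith
    have h6 : a ∈ C ∩ {x | ⟪u, x⟫ = 0} := ⟨ha, h5⟩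
    rw [← hF] at h6
    exact h6.2

/-- If `C_i ∩ C_j` is a face of both cones, then `C_i ∪ C_j` is convex
along the span of `C_i ∩ C_j`. -/
theorem union_convex_along_span_of_inter_face {n : ℕ}
    (Ci Cj : Set (EuclideanSpace ℝ (Fin n)))
    (hCi : IsPolyhedralCone Ci) (hCj : IsPolyhedralCone Cj)
    (hfi : IsFaceOf (Ci ∩ Cj) Ci) (hfj : IsFaceOf (Ci ∩ Cj) Cj)
    (a b : EuclideanSpace ℝ (Fin n)) (ha : a ∈ Ci ∪ Cj) (hb : b ∈ Ci ∪ Cj)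
    (hab : b - a ∈ Submodule.span ℝ (Ci ∩ Cj)) :
    segment ℝ a b ⊆ Ci ∪ Cj := by
  obtain ⟨hi0, hiadd, hismul⟩ := polyCone_props hCi
  obtain ⟨hj0, hjadd, hjsmul⟩ := polyCone_props hCj
  have h0 : (0 : EuclideanSpace ℝ (Fin n)) ∈ Ci ∩ Cj := ⟨hi0, hj0⟩
  have hadd : ∀ x ∈ Ci ∩ Cj, ∀ y ∈ Ci ∩ Cj, x + y ∈ Ci ∩ Cj :=
    fun x hx y hy => ⟨hiadd _ hx.1 _ hy.1, hjadd _ hx.2 _ hy.2⟩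
  have hsmul : ∀ c : ℝ, 0 ≤ c → ∀ x ∈ Ci ∩ Cj, c • x ∈ Ci ∩ Cj :=
    fun c hc x hx => ⟨hismul c hc _ hx.1, hjsmul c hc _ hx.2⟩
  obtain ⟨p, hp, q, hq, hw⟩ := span_diff h0 hadd hsmul _ hab
  have convCi : Convex ℝ Ci := fun x hx y hy s t hs ht _ =>
    hiadd _ (hismul s hs _ hx) _ (hismul t ht _ hy)
  have convCj : Convex ℝ Cj := fun x hx y hy s t hs ht _ =>
    hjadd _ (hjsmul s hs _ hx) _ (hjsmul t ht _ hy)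
  have hz : a + p = b + q := by
    rw [sub_eq_sub_iff_add_eq_add] at hw
    rw [hw]; abel
  have main : (a ∈ Ci ∧ b ∈ Ci) ∨ (a ∈ Cj ∧ b ∈ Cj) := by
    rcases ha with ha | ha <;> rcases hb with hb | hb
    · exact Or.inl ⟨ha, hb⟩
    · have hzi : a + p ∈ Ci := hiadd _ ha _ hp.1
      have hzj : a + p ∈ Cj := by rw [hz]; exact hjadd _ hb _ hq.2
      exact Or.inr ⟨face_absorb hfi ha hp ⟨hzi, hzj⟩, hb⟩
    · have hzi : b + q ∈ Ci := hiadd _ hb _ hq.1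
      have hzj : b + q ∈ Cj := by rw [← hz]; exact hjadd _ ha _ hp.2
      exact Or.inr ⟨ha, face_absorb hfi hb hq ⟨hzi, hzj⟩⟩
    · exact Or.inr ⟨ha, hb⟩
  rcases main with ⟨ha', hb'⟩ | ⟨ha', hb'⟩
  · exact (convCi.segment_subset ha' hb').trans Set.subset_union_left
  · exact (convCj.segment_subset ha' hb').trans Set.subset_union_right
end

section
/- Let 𝓕 be a complete polyhedral fan in ℝ^n, let C_1, C_2, ..., C_r ∈ 𝓕 be cones with ⋂_{i=1}^r C_i = C, let S(C) be the linear span of C, and let π : ℝ^n → ℝ^n be the orthogonal projection onto the orthogonal complement S(C)^⊥. Then π(⋂_{i=1}^r C_i) = ⋂_{i=1}^r π(C_i). -/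
open scoped RealInnerProductSpace

/-! If `y = π xᵢ` with `xᵢ ∈ Cᵢ` for every `i`, then each `xᵢ - y` lies in `span D`. Since `D` is a
convex cone, `span D = D - D`, so a single `a ∈ D` dominates all of them: `a - (xᵢ - y) ∈ D ⊆ Cᵢ`.
Hence `y + a = xᵢ + (a - (xᵢ - y))` lies in every `Cᵢ`, and `π (y + a) = y` because `π` kills
`span D` and fixes `y`. -/

namespace PointedCone

section Span

variable {R E : Type*} [Ring R] [LinearOrder R] [IsOrderedRing R] [AddCommGroup E] [Module R E]
  {C : PointedCone R E}

theorem exists_sub_mem_of_mem_span {z : E} (hz : z ∈ Submodule.span R (C : Set E)) :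
    ∃ a ∈ C, a - z ∈ C := by
  induction hz using Submodule.span_induction with
  | mem x hx => exact ⟨x, hx, by simp⟩
  | zero => exact ⟨0, C.zero_mem, by simp⟩
  | add x y _ _ hx hy =>
    obtain ⟨a, ha, hax⟩ := hx
    obtain ⟨b, hb, hby⟩ := hy
    exact ⟨a + b, C.add_mem ha hb, by rw [add_sub_add_comm]; exact C.add_mem hax hby⟩
  | smul c x _ hx =>
    obtain ⟨a, ha, hax⟩ := hx
    rcases le_total 0 c with hc | hc
    · exact ⟨c • a, C.smul_mem hc ha, by rw [← smul_sub]; exact C.smul_mem hc hax⟩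
    · refine ⟨(-c) • (a - x), C.smul_mem (neg_nonneg.2 hc) hax, ?_⟩
      rw [smul_sub, sub_sub, ← add_smul, neg_add_cancel, zero_smul, sub_zero]
      exact C.smul_mem (neg_nonneg.2 hc) ha

theorem exists_forall_sub_mem_of_forall_mem_span {ι : Type*} [Finite ι] {z : ι → E}
    (hz : ∀ i, z i ∈ Submodule.span R (C : Set E)) : ∃ a ∈ C, ∀ i, a - z i ∈ C := by
  classical
  cases nonempty_fintype ι
  choose a ha haz using fun i => exists_sub_mem_of_mem_span (hz i)
  refine ⟨∑ i, a i, C.sum_mem fun i _ => ha i, fun i => ?_⟩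
  rw [← Finset.add_sum_erase _ _ (Finset.mem_univ i),
    show ∀ s, a i + s - z i = (a i - z i) + s from fun s => by abel]
  exact C.add_mem (haz i) (C.sum_mem fun j _ => ha j)

end Span

variable {E : Type*} [NormedAddCommGroup E] [InnerProductSpace ℝ E]

theorem starProjection_orthogonal_span_image_iInter {ι : Type*} [Finite ι] [Nonempty ι]
    (K : ι → PointedCone ℝ E)
    [(Submodule.span ℝ (⋂ i, (K i : Set E))).HasOrthogonalProjection] :
    (Submodule.span ℝ (⋂ i, (K i : Set E)))ᗮ.starProjection '' ⋂ i, (K i : Set E) =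
      ⋂ i, (Submodule.span ℝ (⋂ i, (K i : Set E)))ᗮ.starProjection '' K i := by
  set V := Submodule.span ℝ (⋂ i, (K i : Set E))
  refine (Set.image_iInter_subset _ _).antisymm fun y hy => ?_
  simp only [Set.mem_iInter, Set.mem_image] at hy
  choose x hx hxy using hy
  have hyV : y ∈ Vᗮ := hxy (Classical.arbitrary ι) ▸ Vᗮ.starProjection_apply_mem _
  have hxyV : ∀ i, x i - y ∈ V := fun i => by
    rw [← hxy i, Submodule.starProjection_orthogonal_val, sub_sub_cancel]
    exact V.starProjection_apply_mem _
  obtain ⟨a, ha, hax⟩ := exists_forall_sub_mem_of_forall_mem_span (C := ⨅ i, K i)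
    (by simpa only [Submodule.coe_iInf] using hxyV)
  have haK : ∀ i, a ∈ K i := Submodule.mem_iInf _ |>.1 ha
  refine ⟨y + a, Set.mem_iInter.2 fun i => ?_, ?_⟩
  · rw [show y + a = x i + (a - (x i - y)) by abel]
    exact (K i).add_mem (hx i) (Submodule.mem_iInf _ |>.1 (hax i) i)
  · rw [map_add, Submodule.starProjection_eq_self_iff.2 hyV,
      Submodule.starProjection_orthogonal_apply_eq_zero
        (Submodule.subset_span (Set.mem_iInter.2 haK)), add_zero]

end PointedCone

theorem IsPolyhedralCone.exists_pointedCone_coe_eq {n : ℕ} {C : Set (EuclideanSpace ℝ (Fin n))}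
    (hC : IsPolyhedralCone C) :
    ∃ K : PointedCone ℝ (EuclideanSpace ℝ (Fin n)), (K : Set _) = C := by
  obtain ⟨k, v, rfl⟩ := hC
  refine ⟨PointedCone.hull ℝ (Set.range v), Set.ext fun x => ?_⟩
  simp only [SetLike.mem_coe, Submodule.mem_span_range_iff_exists_fun, Set.mem_ofPred_eq]
  constructor
  · rintro ⟨c, rfl⟩
    exact ⟨fun i => c i, fun i => (c i).2, rfl⟩
  · rintro ⟨lam, hlam, rfl⟩
    exact ⟨fun i => ⟨lam i, hlam i⟩, rfl⟩

/-- Orthogonal projection onto `S(C)ᗮ` commutes with the intersection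
of cones of a fan whose intersection is `C`. -/
theorem proj_inter_eq_inter_proj {n r : ℕ} (hr : 0 < r)
    (𝓕 : Set (Set (EuclideanSpace ℝ (Fin n)))) (h𝓕 : IsCompleteFan 𝓕)
    (C : Fin r → Set (EuclideanSpace ℝ (Fin n))) (hCmem : ∀ i, C i ∈ 𝓕)
    (D : Set (EuclideanSpace ℝ (Fin n))) (hD : ⋂ i, C i = D)
    (π : EuclideanSpace ℝ (Fin n) → EuclideanSpace ℝ (Fin n))
    (hπ : ∀ x, π x = (Submodule.orthogonalProjectionOnto (Submodule.span ℝ D)ᗮ x :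
      EuclideanSpace ℝ (Fin n))) :
    π '' (⋂ i, C i) = ⋂ i, π '' (C i) := by
  subst hD
  obtain rfl : π = (Submodule.span ℝ (⋂ i, C i))ᗮ.starProjection := funext hπ
  choose K hK using fun i => (h𝓕.2.1 _ (hCmem i)).exists_pointedCone_coe_eq
  obtain rfl : C = fun i => (K i : Set _) := funext fun i => (hK i).symm
  have : Nonempty (Fin r) := ⟨⟨0, hr⟩⟩
  exact PointedCone.starProjection_orthogonal_span_image_iInter K
end

section
/- Let C_1, C_2, ..., C_r be (convex polyhedral) cones in ℝ^n such that ⋂_{i=1}^r C_i = {0}. Then there exists α_0 > 0 such that for every δ > 0 and every X ∈ ℝ^n satisfying dist(X, C_i) ≤ δ for all i = 1, ..., r, we have ‖X‖ ≤ α_0 δ. -/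
open scoped RealInnerProductSpace

/-! The function `x ↦ ∑ᵢ dist(x, Cᵢ)` is continuous, positively homogeneous because every `Cᵢ` is
a cone, and vanishes only at `0` because the `Cᵢ` are closed with intersection `{0}`. Its minimum
`m` on the unit sphere is therefore positive, and `m ‖X‖ ≤ ∑ᵢ dist(X, Cᵢ) ≤ r δ`.

Closedness of a finitely generated cone is conic Carathéodory: along a linear relation among the
generators one of them can be dropped, so the cone is a finite union of images of the closed
orthant under injective linear maps. -/

open Set Metric Pointwise

/-- Push `lam` along `-c` until a first coordinate vanishes: `t = min {lam i / c i | 0 < c i}`. -/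
lemma exists_nonneg_sub_smul_eq_zero {ι : Type*} [Fintype ι] {lam c : ι → ℝ} (hlam : 0 ≤ lam)
    (hc : ∃ i, 0 < c i) : ∃ t : ℝ, 0 ≤ lam - t • c ∧ ∃ i, (lam - t • c) i = 0 := by
  classical
  obtain ⟨i₀, hi₀, hmin⟩ := (Finset.univ.filter fun i => 0 < c i).exists_min_image
    (fun i => lam i / c i) (by obtain ⟨i, hi⟩ := hc; exact ⟨i, by simpa using hi⟩)
  simp only [Finset.mem_filter, Finset.mem_univ, true_and] at hi₀ hmin
  refine ⟨lam i₀ / c i₀, fun i => ?_, i₀, ?_⟩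
  · simp only [Pi.zero_apply, Pi.sub_apply, Pi.smul_apply, smul_eq_mul, sub_nonneg]
    rcases lt_or_ge 0 (c i) with hci | hci
    · exact (le_div_iff₀ hci).mp (hmin i hci)
    · exact (mul_nonpos_of_nonneg_of_nonpos (div_nonneg (hlam i₀) hi₀.le) hci).trans (hlam i)
  · simp [hi₀.ne']

lemma Fintype.linearCombination_comp_succAbove {R M : Type*} [Semiring R] [AddCommMonoid M]
    [Module R M] {m : ℕ} (v : Fin (m + 1) → M) {μ : Fin (m + 1) → R} {i : Fin (m + 1)}
    (hμ : μ i = 0) :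
    Fintype.linearCombination R (v ∘ i.succAbove) (μ ∘ i.succAbove) =
      Fintype.linearCombination R v μ := by
  simp [Fintype.linearCombination_apply, Fin.sum_univ_succAbove _ i, hμ]

lemma image_Ici_eq_iUnion_succAbove {E : Type*} [AddCommGroup E] [Module ℝ E] {m : ℕ}
    {v : Fin (m + 1) → E} (hv : ¬LinearIndependent ℝ v) :
    Fintype.linearCombination ℝ v '' Ici 0 =
      ⋃ i : Fin (m + 1), Fintype.linearCombination ℝ (v ∘ i.succAbove) '' Ici 0 := by
  obtain ⟨g, hg, i, hgi⟩ := Fintype.not_linearIndependent_iff.mp hv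
  obtain ⟨c, hc, hcpos⟩ : ∃ c, Fintype.linearCombination ℝ v c = 0 ∧ ∃ i, 0 < c i := by
    simp only [Fintype.linearCombination_apply]
    rcases hgi.lt_or_gt with h | h
    · exact ⟨-g, by simpa using hg, i, by simpa using h⟩
    · exact ⟨g, hg, i, h⟩
  apply Subset.antisymm
  · rintro _ ⟨lam, hlam, rfl⟩
    obtain ⟨t, ht, i₀, hi₀⟩ := exists_nonneg_sub_smul_eq_zero hlam hcpos
    refine mem_iUnion.mpr ⟨i₀, (lam - t • c) ∘ i₀.succAbove, fun j => ht _, ?_⟩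
    rw [Fintype.linearCombination_comp_succAbove v hi₀, map_sub, map_smul, hc, smul_zero,
      sub_zero]
  · refine iUnion_subset fun i₀ => ?_
    rintro _ ⟨lam, hlam : ∀ j, 0 ≤ lam j, rfl⟩
    refine ⟨Fin.insertNth i₀ 0 lam, fun j => ?_, ?_⟩
    · induction j using Fin.succAboveCases i₀ <;> simp [hlam _]
    · simpa using (Fintype.linearCombination_comp_succAbove v
        (Fin.insertNth_apply_same (α := fun _ => ℝ) i₀ 0 lam)).symm

section ClosedCone

variable {E : Type*} [AddCommGroup E] [Module ℝ E] [TopologicalSpace E] [IsTopologicalAddGroup E]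
  [ContinuousSMul ℝ E] [T2Space E]

lemma isClosed_image_Ici_of_linearIndependent {ι : Type*} [Fintype ι] {v : ι → E}
    (hv : LinearIndependent ℝ v) : IsClosed (Fintype.linearCombination ℝ v '' Ici 0) :=
  (LinearMap.isClosedEmbedding_of_injective
    (LinearMap.ker_eq_bot.mpr hv.fintypeLinearCombination_injective)).isClosedMap _ isClosed_Ici

theorem isClosed_image_linearCombination_Ici {k : ℕ} (v : Fin k → E) :
    IsClosed (Fintype.linearCombination ℝ v '' Ici 0) := by
  induction k with
  | zero => exact isClosed_image_Ici_of_linearIndependent linearIndependent_empty_type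
  | succ m ih =>
    by_cases hv : LinearIndependent ℝ v
    · exact isClosed_image_Ici_of_linearIndependent hv
    · rw [image_Ici_eq_iUnion_succAbove hv]
      exact isClosed_iUnion_of_finite fun i => ih _

end ClosedCone

namespace IsPolyhedralCone

variable {n : ℕ} {C : Set (EuclideanSpace ℝ (Fin n))}

lemma exists_eq_image (h : IsPolyhedralCone C) : ∃ (k : ℕ) (v : Fin k → EuclideanSpace ℝ (Fin n)),
    C = Fintype.linearCombination ℝ v '' Ici 0 := by
  obtain ⟨k, v, rfl⟩ := h
  refine ⟨k, v, ?_⟩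
  ext x
  simp [Fintype.linearCombination_apply, Pi.le_def, eq_comm]

lemma isClosed (h : IsPolyhedralCone C) : IsClosed C := by
  obtain ⟨k, v, rfl⟩ := h.exists_eq_image
  exact isClosed_image_linearCombination_Ici v

lemma smul_mem (h : IsPolyhedralCone C) {c : ℝ} (hc : 0 ≤ c) {x : EuclideanSpace ℝ (Fin n)}
    (hx : x ∈ C) : c • x ∈ C := by
  obtain ⟨k, v, rfl⟩ := h.exists_eq_image
  obtain ⟨lam, hlam, rfl⟩ := hx
  exact ⟨c • lam, mem_Ici.mpr (smul_nonneg hc hlam), map_smul _ c lam⟩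

lemma smul_set_eq (h : IsPolyhedralCone C) {c : ℝ} (hc : 0 < c) : c • C = C :=
  Subset.antisymm (smul_set_subset_iff.mpr fun _ hx => h.smul_mem hc.le hx) fun x hx =>
    mem_smul_set.mpr ⟨c⁻¹ • x, h.smul_mem (inv_nonneg.mpr hc.le) hx, smul_inv_smul₀ hc.ne' x⟩

end IsPolyhedralCone

section Homogeneous

variable {E : Type*} [NormedAddCommGroup E] [NormedSpace ℝ E]

lemma exists_pos_mul_norm_le_of_continuous_of_homogeneous [ProperSpace E] {f : E → ℝ}
    (hf : Continuous f) (hhom : ∀ c : ℝ, 0 < c → ∀ x, f (c • x) = c * f x)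
    (hpos : ∀ x ≠ 0, 0 < f x) : ∃ m > 0, ∀ x, m * ‖x‖ ≤ f x := by
  obtain ⟨m, hm, hmin⟩ := (isCompact_sphere (0 : E) 1).exists_forall_le' hf.continuousOn
    fun x hx => hpos x (ne_of_mem_sphere hx one_ne_zero)
  refine ⟨m, hm, fun x => ?_⟩
  rcases eq_or_ne x 0 with rfl | hx
  · have h0 := hhom 2 two_pos 0
    rw [smul_zero] at h0
    rw [norm_zero, mul_zero]
    linarith
  · have hxn : 0 < ‖x‖ := norm_pos_iff.mpr hx
    have hunit : ‖x‖⁻¹ • x ∈ sphere (0 : E) 1 := by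
      rw [mem_sphere_zero_iff_norm, norm_smul, norm_inv, norm_norm, inv_mul_cancel₀ hxn.ne']
    calc m * ‖x‖ ≤ f (‖x‖⁻¹ • x) * ‖x‖ := mul_le_mul_of_nonneg_right (hmin _ hunit) hxn.le
      _ = f x := by rw [hhom _ (inv_pos.mpr hxn), mul_right_comm, inv_mul_cancel₀ hxn.ne', one_mul]

lemma infDist_smul_of_smul_set_eq {C : Set E} {c : ℝ} (hc : 0 < c) (hC : c • C = C) (x : E) :
    infDist (c • x) C = c * infDist x C := by
  simpa [hC, abs_of_pos hc] using infDist_smul₀ hc.ne' C x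

theorem exists_norm_le_mul_sum_infDist [ProperSpace E] {ι : Type*} [Fintype ι] {C : ι → Set E}
    (hclosed : ∀ i, IsClosed (C i)) (hcone : ∀ i, ∀ c : ℝ, 0 < c → c • C i = C i)
    (hinter : ⋂ i, C i = {0}) : ∃ α > 0, ∀ x, ‖x‖ ≤ α * ∑ i, infDist x (C i) := by
  have hzero : ∀ i, (0 : E) ∈ C i := mem_iInter.mp (hinter ▸ rfl)
  have hpos : ∀ x ≠ 0, 0 < ∑ i, infDist x (C i) := by
    intro x hx
    refine (Finset.sum_nonneg fun i _ => infDist_nonneg).lt_of_ne fun hsum => hx ?_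
    have hdist := (Finset.sum_eq_zero_iff_of_nonneg fun i _ => infDist_nonneg).mp hsum.symm
    rw [← mem_singleton_iff, ← hinter, mem_iInter]
    exact fun i => ((hclosed i).mem_iff_infDist_zero ⟨0, hzero i⟩).mpr (hdist i (Finset.mem_univ i))
  obtain ⟨m, hm, hle⟩ := exists_pos_mul_norm_le_of_continuous_of_homogeneous
    (continuous_finsetSum _ fun i _ => continuous_infDist_pt (C i))
    (fun c hc x => by simp only [infDist_smul_of_smul_set_eq hc (hcone _ c hc), Finset.mul_sum])
    hpos
  exact ⟨m⁻¹, inv_pos.mpr hm, fun x => by rw [inv_mul_eq_div, le_div_iff₀ hm, mul_comm]; exact hle x⟩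

end Homogeneous

/-- Points close to finitely many cones intersecting only at the origin
are close to the origin. -/
theorem norm_le_of_close_to_cones_inter_zero {n r : ℕ} (hr : 0 < r)
    (C : Fin r → Set (EuclideanSpace ℝ (Fin n)))
    (hC : ∀ i, IsPolyhedralCone (C i)) (hinter : ⋂ i, C i = {0}) :
    ∃ α₀ > 0, ∀ δ > 0, ∀ X : EuclideanSpace ℝ (Fin n),
      (∀ i, Metric.infDist X (C i) ≤ δ) → ‖X‖ ≤ α₀ * δ := by
  obtain ⟨α, hα, hle⟩ := exists_norm_le_mul_sum_infDist (fun i => (hC i).isClosed)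
    (fun i _ hc => (hC i).smul_set_eq hc) hinter
  refine ⟨α * r, mul_pos hα (Nat.cast_pos.mpr hr), fun δ _ X hX => ?_⟩
  calc ‖X‖ ≤ α * ∑ i, infDist X (C i) := hle X
    _ ≤ α * ∑ _i : Fin r, δ := by gcongr with i; exact hX i
    _ = α * r * δ := by simp [mul_assoc]
end

section
/- Let C̃ ⊆ ℝ^n be a (convex polyhedral) cone, let C be a proper face of C̃, and let S(C) denote the linear span of C. For each facet σ of C̃, choose a half-space H̃_σ = {x ∈ ℝ^n : u_σ·x ≤ 0} such that C̃ ⊆ H̃_σ and {x : u_σ·x = 0} ∩ C̃ = σ. Then C = (⋂_{σ a facet of C̃ with C ⊄ σ} H̃_σ) ∩ S(C), where the intersection is taken only over facets σ of C̃ that do not contain C. -/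
open scoped RealInnerProductSpace

/-! Facets containing `C` have normals vanishing on `span C`, and `C = C̃ ∩ span C` for a face, so
it suffices that a point `x ∈ span C̃` satisfying every facet inequality lies in `C̃`. If not,
Farkas' lemma gives `a ≤ 0` on `C̃` with `⟪a, x⟫ > 0`. Tilting `a` within `xᗮ` enlarges the exposed
face `C̃ ∩ aᗮ` until it is a facet `σ`; on `span C̃` the normal `u σ` is then a positive multiple
of `a`, so `⟪u σ, x⟫ > 0`. -/

open Module Submodule Function Set

theorem exists_smul_le_of_exists_pos {ι : Type*} [Fintype ι] {f g : ι → ℝ} (hf : 0 ≤ f)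
    (hg : ∃ i, 0 < g i) : ∃ t : ℝ, t • g ≤ f ∧ ∃ i, 0 < g i ∧ t * g i = f i := by
  obtain ⟨j, hj⟩ := hg
  obtain ⟨i₀, hi₀, hmin⟩ :=
    (Finset.univ.filter (0 < g ·)).exists_min_image (fun i => f i / g i) ⟨j, by simpa using hj⟩
  simp only [Finset.mem_filter, Finset.mem_univ, true_and] at hi₀ hmin
  refine ⟨f i₀ / g i₀, fun i => ?_, i₀, hi₀, div_mul_cancel₀ _ hi₀.ne'⟩
  rcases lt_or_ge 0 (g i) with hgi | hgi
  · simpa [mul_comm] using (le_div_iff₀ hgi).mp (hmin i hgi)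
  · simpa using (mul_nonpos_of_nonneg_of_nonpos (div_nonneg (hf i₀) hi₀.le) hgi).trans (hf i)

theorem inner_eq_zero_of_mem_span {E : Type*} [NormedAddCommGroup E] [InnerProductSpace ℝ E]
    {a x : E} {s : Set E} (h : ∀ y ∈ s, ⟪a, y⟫ = 0) (hx : x ∈ span ℝ s) : ⟪a, x⟫ = 0 :=
  mem_orthogonal_singleton_iff_inner_right.mp
    (span_le.mpr (fun y hy => mem_orthogonal_singleton_iff_inner_right.mpr (h y hy)) hx)

def conicHull {ι E : Type*} [AddCommGroup E] [Module ℝ E] (s : Finset ι) (v : ι → E) : Set E :=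
  {x | ∃ c : ι → ℝ, (∀ i, 0 ≤ c i) ∧ x = ∑ i ∈ s, c i • v i}

section conicHull

variable {ι E : Type*}

section Module

variable [AddCommGroup E] [Module ℝ E] {s : Finset ι} {v : ι → E} {x : E}

theorem zero_mem_conicHull : (0 : E) ∈ conicHull s v :=
  ⟨0, fun _ => le_rfl, by simp⟩

theorem apply_mem_conicHull {i : ι} (hi : i ∈ s) : v i ∈ conicHull s v := by
  classical
  refine ⟨Pi.single i 1, fun j => ?_, by simp [Pi.single_apply, ite_smul, hi]⟩
  rw [Pi.single_apply]
  split_ifs <;> norm_num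

theorem conicHull_subset_span : conicHull s v ⊆ span ℝ (v '' s) := by
  rintro x ⟨c, -, rfl⟩
  exact sum_mem fun i hi => smul_mem _ _ (subset_span (mem_image_of_mem v hi))

theorem smul_add_mem_conicHull_insert [DecidableEq ι] {j : ι} (hj : j ∉ s) {t : ℝ} (ht : 0 ≤ t)
    (hx : x ∈ conicHull s v) : t • v j + x ∈ conicHull (insert j s) v := by
  obtain ⟨c, hc, rfl⟩ := hx
  refine ⟨update c j t, fun i => ?_, ?_⟩
  · rcases eq_or_ne i j with rfl | hij
    · simpa using ht
    · simpa [hij] using hc i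
  · rw [Finset.sum_insert hj, update_self]
    congr 1
    exact Finset.sum_congr rfl fun i hi => by rw [update_of_ne (ne_of_mem_of_not_mem hi hj)]

theorem conicHull_comp_linearMap {F : Type*} [AddCommGroup F] [Module ℝ F] (f : E →ₗ[ℝ] F) :
    conicHull s (f ∘ v) = f '' conicHull s v := by
  ext y
  simp [conicHull, map_sum, eq_comm]

end Module

variable [NormedAddCommGroup E] [InnerProductSpace ℝ E] {s : Finset ι} {v : ι → E} {x : E}

theorem inner_nonpos_of_mem_conicHull {a : E} (ha : ∀ i ∈ s, ⟪a, v i⟫ ≤ 0)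
    (hx : x ∈ conicHull s v) : ⟪a, x⟫ ≤ 0 := by
  obtain ⟨c, hc, rfl⟩ := hx
  rw [inner_sum]
  exact Finset.sum_nonpos fun i hi => by
    rw [real_inner_smul_right]; exact mul_nonpos_of_nonneg_of_nonpos (hc i) (ha i hi)

/-- Farkas' lemma. If `⟪a, v j⟫ > 0` for the certificate `a` of the smaller problem, project along
`v j` onto `ker a`: a certificate for the projected problem pulls back. -/
theorem exists_inner_pos_of_notMem_conicHull [DecidableEq ι] (hx : x ∉ conicHull s v) :
    ∃ a : E, (∀ i ∈ s, ⟪a, v i⟫ ≤ 0) ∧ 0 < ⟪a, x⟫ := by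
  induction s using Finset.induction_on generalizing v x with
  | empty =>
    have hx0 : x ≠ 0 := by rintro rfl; exact hx zero_mem_conicHull
    exact ⟨x, by simp, real_inner_self_pos.mpr hx0⟩
  | insert j s hj ih =>
    obtain ⟨a, ha, hax⟩ := ih (v := v) fun h => hx (by
      simpa using smul_add_mem_conicHull_insert hj le_rfl h)
    rcases le_or_gt ⟪a, v j⟫ 0 with haj | haj
    · exact ⟨a, Finset.forall_mem_insert _ _ _ |>.mpr ⟨haj, ha⟩, hax⟩
    set P : E →ₗ[ℝ] E := LinearMap.id - (innerₛₗ ℝ a).smulRight ((⟪a, v j⟫)⁻¹ • v j)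
    have hP : ∀ y, P y = y - (⟪a, y⟫ / ⟪a, v j⟫) • v j := fun y => by
      simp [P, smul_smul, div_eq_mul_inv]
    have hPx : P x ∉ conicHull s (P ∘ v) := by
      rw [conicHull_comp_linearMap]
      rintro ⟨y, hy, hPy⟩
      have hxy : x = (⟪a, x - y⟫ / ⟪a, v j⟫) • v j + y := by
        have : P (x - y) = 0 := by rw [map_sub, hPy, sub_self]
        rw [hP, sub_eq_zero] at this
        rw [← this, sub_add_cancel]
      have hτ : 0 ≤ ⟪a, x - y⟫ / ⟪a, v j⟫ := by
        rw [inner_sub_right]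
        exact div_nonneg (by linarith [inner_nonpos_of_mem_conicHull ha hy]) haj.le
      exact hx (hxy ▸ smul_add_mem_conicHull_insert hj hτ hy)
    obtain ⟨b, hb, hbx⟩ := ih hPx
    have hpull : ∀ y, ⟪b - (⟪b, v j⟫ / ⟪a, v j⟫) • a, y⟫ = ⟪b, P y⟫ := fun y => by
      rw [hP, inner_sub_left, inner_sub_right, real_inner_smul_left, real_inner_smul_right]
      ring
    refine ⟨_, Finset.forall_mem_insert _ _ _ |>.mpr ⟨?_, fun i hi => (hpull _).trans_le (hb i hi)⟩,
      (hpull x).symm ▸ hbx⟩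
    rw [hpull, hP, div_self haj.ne', one_smul, sub_self, inner_zero_right]

end conicHull

section Faces

variable {n : ℕ}

def exposedFace (C : Set (EuclideanSpace ℝ (Fin n))) (a : EuclideanSpace ℝ (Fin n)) :
    Set (EuclideanSpace ℝ (Fin n)) :=
  C ∩ {y | ⟪a, y⟫ = 0}

theorem IsFaceOf.subset {F C : Set (EuclideanSpace ℝ (Fin n))} (h : IsFaceOf F C) : F ⊆ C := by
  rcases h with rfl | ⟨u, -, rfl⟩
  · exact subset_rfl
  · exact inter_subset_left

theorem IsFaceOf.mem_of_mem_span {F C : Set (EuclideanSpace ℝ (Fin n))} (h : IsFaceOf F C)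
    {x : EuclideanSpace ℝ (Fin n)} (hxC : x ∈ C) (hxF : x ∈ span ℝ F) : x ∈ F := by
  rcases h with rfl | ⟨u, -, rfl⟩
  · exact hxC
  · exact ⟨hxC, inner_eq_zero_of_mem_span (fun y hy => hy.2) hxF⟩

theorem coneDim_mono {F G : Set (EuclideanSpace ℝ (Fin n))} (h : F ⊆ G) : coneDim F ≤ coneDim G :=
  finrank_mono (span_mono h)

theorem coneDim_lt_coneDim {F G : Set (EuclideanSpace ℝ (Fin n))} (hFG : F ⊆ G)
    {w y : EuclideanSpace ℝ (Fin n)} (hw : ∀ z ∈ F, ⟪w, z⟫ = 0) (hy : y ∈ span ℝ G)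
    (hwy : ⟪w, y⟫ ≠ 0) : coneDim F < coneDim G :=
  finrank_lt_finrank_of_lt <| SetLike.lt_iff_le_and_exists.mpr
    ⟨span_mono hFG, y, hy, fun h => hwy (inner_eq_zero_of_mem_span hw h)⟩

theorem mem_polarCone_conicHull {ι : Type*} {s : Finset ι} {v : ι → EuclideanSpace ℝ (Fin n)}
    {a : EuclideanSpace ℝ (Fin n)} : a ∈ polarCone (conicHull s v) ↔ ∀ i ∈ s, ⟪a, v i⟫ ≤ 0 :=
  ⟨fun ha _ hi => ha _ (apply_mem_conicHull hi), fun ha _ => inner_nonpos_of_mem_conicHull ha⟩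

theorem inner_pos_of_isFacetOf_exposedFace {C : Set (EuclideanSpace ℝ (Fin n))}
    {a u x : EuclideanSpace ℝ (Fin n)} (hx : x ∈ span ℝ C) (ha : a ∈ polarCone C)
    (hax : 0 < ⟪a, x⟫) (hfacet : IsFacetOf (exposedFace C a) C) (hu : u ∈ polarCone C)
    (hu_face : {y | ⟪u, y⟫ = 0} ∩ C = exposedFace C a) : 0 < ⟪u, x⟫ := by
  -- By dimension `span C = span (exposedFace C a) ⊕ ℝ p`; `a` and `u` vanish on the first
  -- summand and are negative at `p`.
  obtain ⟨p, hpC, hap⟩ : ∃ p ∈ C, ⟪a, p⟫ < 0 := by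
    by_contra! h
    exact hax.ne' (inner_eq_zero_of_mem_span (fun y hy => le_antisymm (ha y hy) (h y hy)) hx)
  have hpσ : p ∉ span ℝ (exposedFace C a) :=
    fun hp => hap.ne (inner_eq_zero_of_mem_span (fun y hy => hy.2) hp)
  have hup : ⟪u, p⟫ < 0 := (hu p hpC).lt_of_ne fun h =>
    hap.ne (show p ∈ exposedFace C a from hu_face ▸ ⟨h, hpC⟩).2
  have hspan : span ℝ (exposedFace C a) ⊔ ℝ ∙ p = span ℝ C :=
    eq_of_le_of_finrank_eq
      (sup_le (span_mono inter_subset_left) ((span_singleton_le_iff_mem _ _).mpr (subset_span hpC)))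
      (by rw [finrank_sup_span_singleton hpσ]; exact hfacet.2)
  obtain ⟨y, hy, z, hz, rfl⟩ := mem_sup.mp (hspan ▸ hx)
  obtain ⟨t, rfl⟩ := mem_span_singleton.mp hz
  have hay : ⟪a, y⟫ = 0 := inner_eq_zero_of_mem_span (fun z hz => hz.2) hy
  have huy : ⟪u, y⟫ = 0 := inner_eq_zero_of_mem_span (fun z hz => (hu_face ▸ hz).1) hy
  rw [inner_add_right, real_inner_smul_right, hay] at hax
  rw [inner_add_right, real_inner_smul_right, huy]
  nlinarith

end Faces

section PolyhedralCone

variable {n : ℕ}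

theorem isPolyhedralCone_iff {C : Set (EuclideanSpace ℝ (Fin n))} :
    IsPolyhedralCone C ↔ ∃ (k : ℕ) (v : Fin k → EuclideanSpace ℝ (Fin n)),
      C = conicHull Finset.univ v :=
  Iff.rfl

theorem exists_mem_orthogonal_inner_pos {ι : Type*} [Fintype ι]
    {v : ι → EuclideanSpace ℝ (Fin n)} {W : Submodule ℝ (EuclideanSpace ℝ (Fin n))}
    (hW : W < span ℝ (conicHull Finset.univ v)) : ∃ w ∈ Wᗮ, ∃ i, 0 < ⟪w, v i⟫ := by
  obtain ⟨w, ⟨hwW, hwC⟩, hw0⟩ : ∃ w ∈ Wᗮ ⊓ span ℝ (conicHull Finset.univ v), w ≠ 0 := by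
    refine exists_mem_ne_zero_of_ne_bot fun h => hW.ne ?_
    simpa [h] using sup_orthogonal_inf_of_hasOrthogonalProjection hW.le
  obtain ⟨i, hi⟩ : ∃ i, ⟪w, v i⟫ ≠ 0 := by
    by_contra! h
    refine hw0 (inner_self_eq_zero.mp
      (inner_eq_zero_of_mem_span ?_ (span_le.mpr conicHull_subset_span hwC)))
    simpa using h
  rcases hi.lt_or_gt with hneg | hpos
  · exact ⟨-w, neg_mem hwW, i, by simpa [inner_neg_left] using hneg⟩
  · exact ⟨w, hwW, i, hpos⟩

variable {C : Set (EuclideanSpace ℝ (Fin n))} {x : EuclideanSpace ℝ (Fin n)}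

/-- Tilt `a` along `w ⊥ span (exposedFace C a) + ℝ x` until the exposed face picks up a new
generator. -/
theorem IsPolyhedralCone.exists_coneDim_exposedFace_lt (hC : IsPolyhedralCone C)
    {a : EuclideanSpace ℝ (Fin n)} (hx : x ∈ span ℝ C) (ha : a ∈ polarCone C) (hax : 0 < ⟪a, x⟫)
    (hdim : coneDim (exposedFace C a) + 1 < coneDim C) :
    ∃ a' ∈ polarCone C, 0 < ⟪a', x⟫ ∧ coneDim (exposedFace C a) < coneDim (exposedFace C a') := by
  obtain ⟨k, v, rfl⟩ := isPolyhedralCone_iff.mp hC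
  set F := exposedFace (conicHull Finset.univ v) a
  have hxF : x ∉ span ℝ F := fun h => hax.ne' (inner_eq_zero_of_mem_span (fun y hy => hy.2) h)
  have hW : span ℝ F ⊔ ℝ ∙ x < span ℝ (conicHull Finset.univ v) := by
    refine lt_of_le_of_ne (sup_le (span_mono inter_subset_left)
      ((span_singleton_le_iff_mem _ _).mpr hx)) fun h => ?_
    have := finrank_sup_span_singleton hxF
    rw [h] at this
    exact hdim.ne' this
  obtain ⟨w, hw, i, hwi⟩ := exists_mem_orthogonal_inner_pos hW
  have hw_zero : ∀ y ∈ span ℝ F ⊔ ℝ ∙ x, ⟪w, y⟫ = 0 :=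
    fun y hy => inner_left_of_mem_orthogonal hy hw
  have hwF : ∀ y ∈ F, ⟪w, y⟫ = 0 := fun y hy => hw_zero y (mem_sup_left (subset_span hy))
  obtain ⟨t, hle, i₀, hwi₀, hti₀⟩ := exists_smul_le_of_exists_pos
    (f := fun i => -⟪a, v i⟫) (g := fun i => ⟪w, v i⟫)
    (fun i => neg_nonneg.mpr (mem_polarCone_conicHull.mp ha i (Finset.mem_univ i))) ⟨i, hwi⟩
  have hinner : ∀ y, ⟪a + t • w, y⟫ = ⟪a, y⟫ + t * ⟪w, y⟫ := fun y => by
    rw [inner_add_left, real_inner_smul_left]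
  refine ⟨a + t • w, mem_polarCone_conicHull.mpr fun i _ => ?_, ?_, ?_⟩
  · have := hle i
    simp only [Pi.smul_apply, smul_eq_mul] at this
    linarith [hinner (v i)]
  · rw [hinner, hw_zero x (mem_sup_right (mem_span_singleton_self x)), mul_zero, add_zero]
    exact hax
  · refine coneDim_lt_coneDim (fun y hy => ⟨hy.1, ?_⟩) hwF
      (subset_span ⟨apply_mem_conicHull (Finset.mem_univ i₀), ?_⟩) hwi₀.ne'
    · show ⟪a + t • w, y⟫ = 0
      rw [hinner, hy.2, hwF y hy, mul_zero, add_zero]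
    · show ⟪a + t • w, v i₀⟫ = 0
      rw [hinner, hti₀, add_neg_cancel]

theorem IsPolyhedralCone.exists_isFacetOf_exposedFace (hC : IsPolyhedralCone C)
    {a : EuclideanSpace ℝ (Fin n)} (hx : x ∈ span ℝ C) (ha : a ∈ polarCone C) (hax : 0 < ⟪a, x⟫) :
    ∃ a ∈ polarCone C, 0 < ⟪a, x⟫ ∧ IsFacetOf (exposedFace C a) C := by
  by_cases hfacet : coneDim (exposedFace C a) + 1 = coneDim C
  · exact ⟨a, ha, hax, .inr ⟨a, ha, rfl⟩, hfacet⟩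
  have hlt : coneDim (exposedFace C a) < coneDim C :=
    coneDim_lt_coneDim inter_subset_left (fun y hy => hy.2) hx hax.ne'
  obtain ⟨a', ha', ha'x, hdim⟩ := hC.exists_coneDim_exposedFace_lt hx ha hax (by omega)
  have := coneDim_mono (F := exposedFace C a') inter_subset_left
  exact hC.exists_isFacetOf_exposedFace hx ha' ha'x
termination_by coneDim C - coneDim (exposedFace C a)

theorem IsPolyhedralCone.mem_of_forall_isFacetOf_inner_nonpos (hC : IsPolyhedralCone C)
    {u : Set (EuclideanSpace ℝ (Fin n)) → EuclideanSpace ℝ (Fin n)}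
    (hu_half : ∀ σ, IsFacetOf σ C → u σ ∈ polarCone C)
    (hu_face : ∀ σ, IsFacetOf σ C → {y | ⟪u σ, y⟫ = 0} ∩ C = σ)
    (hx : x ∈ span ℝ C) (hxu : ∀ σ, IsFacetOf σ C → ⟪u σ, x⟫ ≤ 0) : x ∈ C := by
  by_contra hxC
  obtain ⟨k, v, rfl⟩ := isPolyhedralCone_iff.mp hC
  obtain ⟨a₀, ha₀, ha₀x⟩ := exists_inner_pos_of_notMem_conicHull hxC
  obtain ⟨a, ha, hax, hfacet⟩ :=
    hC.exists_isFacetOf_exposedFace hx (mem_polarCone_conicHull.mpr ha₀) ha₀x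
  exact (hxu _ hfacet).not_gt <| inner_pos_of_isFacetOf_exposedFace hx ha hax hfacet
    (hu_half _ hfacet) (hu_face _ hfacet)

end PolyhedralCone

theorem face_eq_inter_facet_halfspaces_inter_span_general {n : ℕ}
    (Ct C : Set (EuclideanSpace ℝ (Fin n))) (hCt : IsPolyhedralCone Ct)
    (hface : IsFaceOf C Ct)
    (u : Set (EuclideanSpace ℝ (Fin n)) → EuclideanSpace ℝ (Fin n))
    (hu_half : ∀ σ, IsFacetOf σ Ct → ∀ x ∈ Ct, ⟪u σ, x⟫ ≤ 0)
    (hu_face : ∀ σ, IsFacetOf σ Ct → {x | ⟪u σ, x⟫ = 0} ∩ Ct = σ) :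
    C = (⋂ σ ∈ {σ | IsFacetOf σ Ct ∧ ¬ C ⊆ σ}, {x | ⟪u σ, x⟫ ≤ 0}) ∩
        (Submodule.span ℝ C : Set (EuclideanSpace ℝ (Fin n))) := by
  ext x
  refine ⟨fun hxC => ⟨mem_iInter₂.mpr fun σ hσ => hu_half σ hσ.1 x (hface.subset hxC),
    subset_span hxC⟩, fun ⟨hx_half, hx_span⟩ => ?_⟩
  have hxu : ∀ σ, IsFacetOf σ Ct → ⟪u σ, x⟫ ≤ 0 := by
    intro σ hσ
    by_cases hCσ : C ⊆ σ
    · refine (inner_eq_zero_of_mem_span (fun y hy => ?_) hx_span).le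
      exact (show y ∈ {x | ⟪u σ, x⟫ = 0} ∩ Ct from (hu_face σ hσ).symm ▸ hCσ hy).1
    · exact mem_iInter₂.mp hx_half σ ⟨hσ, hCσ⟩
  exact hface.mem_of_mem_span
    (hCt.mem_of_forall_isFacetOf_inner_nonpos hu_half hu_face (span_mono hface.subset hx_span) hxu)
    hx_span

/-- A proper face `C` of a cone `C̃` is the intersection of the
half-spaces of the facets of `C̃` not containing `C`, intersected with `S(C)`. -/
theorem face_eq_inter_facet_halfspaces_inter_span {n : ℕ}
    (Ct C : Set (EuclideanSpace ℝ (Fin n))) (hCt : IsPolyhedralCone Ct)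
    (hface : IsFaceOf C Ct) (hproper : C ≠ Ct)
    (u : Set (EuclideanSpace ℝ (Fin n)) → EuclideanSpace ℝ (Fin n))
    (hu_half : ∀ σ, IsFacetOf σ Ct → ∀ x ∈ Ct, ⟪u σ, x⟫ ≤ 0)
    (hu_face : ∀ σ, IsFacetOf σ Ct → {x | ⟪u σ, x⟫ = 0} ∩ Ct = σ) :
    C = (⋂ σ ∈ {σ | IsFacetOf σ Ct ∧ ¬ C ⊆ σ}, {x | ⟪u σ, x⟫ ≤ 0}) ∩
        (Submodule.span ℝ C : Set (EuclideanSpace ℝ (Fin n))) :=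
  face_eq_inter_facet_halfspaces_inter_span_general Ct C hCt hface u hu_half hu_face
end

section
/- Let C̃ be a (convex polyhedral) cone in ℝ^n and let C be a proper face of C̃, with S(C) the linear span of C. Then there exists r_0 > 0 such that for every δ* > 0 and every point P* ∈ S(C) with dist(P*, C̃) ≤ δ*, we have dist(P*, C) ≤ r_0 δ*. -/
open scoped RealInnerProductSpace

/-!
Write `C̃` as the nonnegative combinations of `v₁, …, v_k` and `C = C̃ ∩ u^⊥` with `u ∈ C̃°`.
Given `Q = ∑ λᵢ vᵢ ∈ C̃`, dropping the terms with `⟪u, vᵢ⟫ < 0` yields a point of `C`. Each dropped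
coefficient satisfies `λᵢ · (-⟪u, vᵢ⟫) ≤ -⟪u, Q⟫`, and for `P ∈ span C ⊆ u^⊥` we have
`-⟪u, Q⟫ = ⟪u, P - Q⟫ ≤ ‖u‖ · dist P Q`. So the dropped part has norm `O(dist P Q)`.
-/

open Metric

lemma Metric.infDist_le_mul_infDist {α : Type*} [PseudoMetricSpace α] {x : α} {s t : Set α}
    {r : ℝ} (hr : 0 < r) (ht : t.Nonempty) (h : ∀ y ∈ t, infDist x s ≤ r * dist x y) :
    infDist x s ≤ r * infDist x t := by
  rw [← div_le_iff₀' hr, le_infDist ht]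
  intro y hy
  rw [div_le_iff₀' hr]
  exact h y hy

section FiniteCone

variable {E ι : Type*} [NormedAddCommGroup E] [InnerProductSpace ℝ E] [Fintype ι]

def finiteCone (v : ι → E) : Set E :=
  {x | ∃ lam : ι → ℝ, (∀ i, 0 ≤ lam i) ∧ x = ∑ i, lam i • v i}

variable {v : ι → E} {u : E} {lam : ι → ℝ}

lemma zero_mem_finiteCone : (0 : E) ∈ finiteCone v :=
  ⟨0, fun _ => le_rfl, by simp⟩

lemma apply_mem_finiteCone (i : ι) : v i ∈ finiteCone v := by
  classical
  exact ⟨Pi.single i 1, fun j => by by_cases h : j = i <;> simp [h], by simp [Pi.single_apply]⟩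

lemma neg_inner_sum_smul :
    -⟪u, ∑ j, lam j • v j⟫ = ∑ j, lam j * -⟪u, v j⟫ := by
  simp only [inner_sum, real_inner_smul_right, mul_neg, Finset.sum_neg_distrib]

lemma coeff_mul_neg_inner_le (hu : ∀ j, ⟪u, v j⟫ ≤ 0) (hlam : ∀ j, 0 ≤ lam j) (i : ι) :
    lam i * -⟪u, v i⟫ ≤ -⟪u, ∑ j, lam j • v j⟫ := by
  rw [neg_inner_sum_smul]
  exact Finset.single_le_sum (f := fun j => lam j * -⟪u, v j⟫)
    (fun j _ => mul_nonneg (hlam j) (neg_nonneg.mpr (hu j))) (Finset.mem_univ i)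

lemma sum_ite_mem_finiteCone_inter (hlam : ∀ j, 0 ≤ lam j) :
    ∑ i, (if ⟪u, v i⟫ = 0 then lam i else 0) • v i ∈ finiteCone v ∩ {x | ⟪u, x⟫ = 0} := by
  refine ⟨⟨_, fun i => ?_, rfl⟩, ?_⟩
  · split_ifs
    exacts [hlam i, le_rfl]
  · simp only [Set.mem_ofPred_eq, inner_sum, real_inner_smul_right]
    exact Finset.sum_eq_zero fun i _ => by split_ifs with h <;> simp [h]

lemma norm_sum_sub_sum_ite_le (hu : ∀ j, ⟪u, v j⟫ ≤ 0) (hlam : ∀ j, 0 ≤ lam j) :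
    ‖∑ i, lam i • v i - ∑ i, (if ⟪u, v i⟫ = 0 then lam i else 0) • v i‖ ≤
      (∑ i, ‖v i‖ / -⟪u, v i⟫) * -⟪u, ∑ i, lam i • v i⟫ := by
  rw [← Finset.sum_sub_distrib, Finset.sum_mul]
  refine (norm_sum_le _ _).trans (Finset.sum_le_sum fun i _ => ?_)
  by_cases hi : ⟪u, v i⟫ = 0
  · simp [hi]
  have hneg : 0 < -⟪u, v i⟫ := neg_pos.mpr (lt_of_le_of_ne (hu i) hi)
  have hcoeff := mul_le_mul_of_nonneg_right (coeff_mul_neg_inner_le hu hlam i) (norm_nonneg (v i))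
  rw [if_neg hi, zero_smul, sub_zero, norm_smul, Real.norm_of_nonneg (hlam i), div_mul_eq_mul_div,
    le_div_iff₀ hneg]
  linarith

lemma exists_infDist_finiteCone_inter_le (hu : ∀ i, ⟪u, v i⟫ ≤ 0) :
    ∃ r > 0, ∀ P : E, ⟪u, P⟫ = 0 →
      infDist P (finiteCone v ∩ {x | ⟪u, x⟫ = 0}) ≤ r * infDist P (finiteCone v) := by
  set K := ∑ i, ‖v i‖ / -⟪u, v i⟫
  have hK : 0 ≤ K :=
    Finset.sum_nonneg fun i _ => div_nonneg (norm_nonneg _) (neg_nonneg.mpr (hu i))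
  refine ⟨1 + K * ‖u‖, by positivity, fun P hP => ?_⟩
  refine infDist_le_mul_infDist (by positivity) ⟨0, zero_mem_finiteCone⟩ ?_
  rintro _ ⟨lam, hlam, rfl⟩
  set Q := ∑ i, lam i • v i
  have hQ : -⟪u, Q⟫ ≤ ‖u‖ * dist P Q := calc
    -⟪u, Q⟫ = ⟪u, P - Q⟫ := by rw [inner_sub_right, hP, zero_sub]
    _ ≤ ‖u‖ * dist P Q := by rw [dist_eq_norm]; exact real_inner_le_norm _ _
  calc infDist P (finiteCone v ∩ {x | ⟪u, x⟫ = 0})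
      ≤ dist P (∑ i, (if ⟪u, v i⟫ = 0 then lam i else 0) • v i) :=
        infDist_le_dist_of_mem (sum_ite_mem_finiteCone_inter hlam)
    _ ≤ dist P Q + ‖Q - ∑ i, (if ⟪u, v i⟫ = 0 then lam i else 0) • v i‖ := by
        rw [← dist_eq_norm]; exact dist_triangle _ _ _
    _ ≤ dist P Q + K * (‖u‖ * dist P Q) := by
        gcongr
        exact (norm_sum_sub_sum_ite_le hu hlam).trans (mul_le_mul_of_nonneg_left hQ hK)
    _ = (1 + K * ‖u‖) * dist P Q := by ring

end FiniteCone

theorem dist_to_face_le_of_mem_span_general {n : ℕ}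
    (Ct C : Set (EuclideanSpace ℝ (Fin n))) (hCt : IsPolyhedralCone Ct)
    (hface : IsFaceOf C Ct) :
    ∃ r₀ > 0, ∀ δs > 0, ∀ P : EuclideanSpace ℝ (Fin n),
      P ∈ Submodule.span ℝ C → Metric.infDist P Ct ≤ δs →
        Metric.infDist P C ≤ r₀ * δs := by
  obtain ⟨k, v, rfl⟩ := hCt
  rcases hface with rfl | ⟨u, hu, rfl⟩
  · exact ⟨1, one_pos, fun δs _ P _ hP => by rwa [one_mul]⟩
  obtain ⟨r, hr, hdist⟩ :=
    exists_infDist_finiteCone_inter_le fun i => hu _ (apply_mem_finiteCone i)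
  have hspan : Submodule.span ℝ (finiteCone v ∩ {x | ⟪u, x⟫ = 0}) ≤ (ℝ ∙ u)ᗮ :=
    Submodule.span_le.mpr fun x hx => (Submodule.mem_orthogonal_singleton_iff_inner_right).mpr hx.2
  refine ⟨r, hr, fun δs _ P hP hPδ => ?_⟩
  exact (hdist P ((Submodule.mem_orthogonal_singleton_iff_inner_right).mp (hspan hP))).trans
    (mul_le_mul_of_nonneg_left hPδ hr.le)

/-- A point of `S(C)` close to the cone `C̃` is close to the proper
face `C`, with a linear bound. -/
theorem dist_to_face_le_of_mem_span {n : ℕ}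
    (Ct C : Set (EuclideanSpace ℝ (Fin n))) (hCt : IsPolyhedralCone Ct)
    (hface : IsFaceOf C Ct) (hproper : C ≠ Ct) :
    ∃ r₀ > 0, ∀ δs > 0, ∀ P : EuclideanSpace ℝ (Fin n),
      P ∈ Submodule.span ℝ C → Metric.infDist P Ct ≤ δs →
        Metric.infDist P C ≤ r₀ * δs :=
  dist_to_face_le_of_mem_span_general Ct C hCt hface
end

section
/- Let 𝓕 be a complete polyhedral fan in ℝ^n and let d = (d_0, d_1, ..., d_{n−1}) ∈ ℝ^n_{>0}. Then there exists d̃ = (d̃_0, d̃_1, ..., d̃_{n−1}) ∈ ℝ^n_{>0} with d̃_k ≥ d_k for all k = 0, ..., n−1, such that the quasi-toric differential inclusion given by 𝓕 and d̃ is well-defined. -/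
open scoped RealInnerProductSpace

/-!
Two finitely generated cones `C`, `C'` whose intersection is a face of `C` satisfy a linear error
bound `dist(X, C ∩ C') ≤ L (dist(X, C) + dist(X, C'))`. Indeed, Farkas' lemma applied generator by
generator gives `w` with `⟪·, w⟫ ≥ 0` on `C`, `≤ 0` on `C'`, and vanishing on a generator of `C`
only if that generator lies in `C'`. Then a point `x ∈ C` is within a multiple of `⟪x, w⟫` of
`C ∩ C'`, and `⟪x, w⟫ ≤ ⟪x - z, w⟫ ≤ ‖w‖ ‖x - z‖` for every `z ∈ C'`. A fan is finite, so one `L`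
serves for all pairs. If `C ∩ C'` is neither `C` nor `C'`, it is a proper face of both, so its
dimension `h` is below both `k` and `m`, and `d̃ₖ = D (2L + 1)^(n - k)` with `D ≥ max dₖ` gives
`L (d̃ₖ + d̃ₘ) ≤ d̃ₕ`.
-/

open Set

section LinearCombination

variable {E : Type*} [AddCommGroup E] [Module ℝ E] {ι : Type*} [Fintype ι]

lemma exists_nonneg_coeffs_eq_zero_at {v : ι → E} {c : ι → ℝ} (hc : ∑ i, c i • v i = 0)
    (hpos : ∃ i, 0 < c i) {lam : ι → ℝ} (hlam : ∀ i, 0 ≤ lam i) :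
    ∃ i₀, ∃ lam' : ι → ℝ, (∀ i, 0 ≤ lam' i) ∧ lam' i₀ = 0 ∧
      ∑ i, lam' i • v i = ∑ i, lam i • v i := by
  classical
  obtain ⟨i₀, hi₀, hmin⟩ := Finset.exists_min_image {i | 0 < c i} (fun i => lam i / c i)
    (by simpa [Finset.Nonempty] using hpos)
  rw [Finset.mem_filter_univ] at hi₀
  set t := lam i₀ / c i₀
  refine ⟨i₀, fun i => lam i - t * c i, fun i => ?_, by simp [t, hi₀.ne'], ?_⟩
  · rcases lt_or_ge 0 (c i) with hci | hci
    · have := (le_div_iff₀ hci).1 (hmin i (by simpa using hci))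
      linarith
    · nlinarith [hlam i, div_nonneg (hlam i₀) hi₀.le]
  · simp [sub_smul, Finset.sum_sub_distrib, mul_smul, ← Finset.smul_sum, hc]

lemma exists_sum_smul_eq_zero_pos_of_not_linearIndependent {v : ι → E}
    (hv : ¬LinearIndependent ℝ v) : ∃ c : ι → ℝ, ∑ i, c i • v i = 0 ∧ ∃ i, 0 < c i := by
  obtain ⟨g, hg, i, hi⟩ := Fintype.not_linearIndependent_iff.1 hv
  rcases hi.lt_or_gt with hi | hi
  · exact ⟨-g, by simp [neg_smul, hg], i, by simpa using hi⟩
  · exact ⟨g, hg, i, hi⟩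

end LinearCombination

namespace PointedCone

section FinitelyGenerated

variable {E : Type*} [AddCommGroup E] [Module ℝ E] {ι : Type*} [Fintype ι]

lemma mem_hull_range_iff {v : ι → E} {x : E} :
    x ∈ hull ℝ (range v) ↔ ∃ lam : ι → ℝ, (∀ i, 0 ≤ lam i) ∧ x = ∑ i, lam i • v i := by
  rw [Submodule.mem_span_range_iff_exists_fun]
  constructor
  · rintro ⟨c, rfl⟩
    exact ⟨fun i => c i, fun i => (c i).2, rfl⟩
  · rintro ⟨lam, hlam, rfl⟩
    exact ⟨fun i => ⟨lam i, hlam i⟩, rfl⟩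

lemma hull_range_eq_iUnion_of_not_linearIndependent {k : ℕ} {v : Fin (k + 1) → E}
    (hv : ¬LinearIndependent ℝ v) :
    (hull ℝ (range v) : Set E) =
      ⋃ i : Fin (k + 1), (hull ℝ (range (v ∘ i.succAbove)) : Set E) := by
  refine Subset.antisymm (fun x hx => ?_) <| iUnion_subset fun i =>
    Submodule.span_mono (range_comp_subset_range _ _)
  obtain ⟨c, hc, hpos⟩ := exists_sum_smul_eq_zero_pos_of_not_linearIndependent hv
  obtain ⟨lam, hlam, rfl⟩ := mem_hull_range_iff.1 hx
  obtain ⟨i₀, lam', hlam', hi₀, hsum⟩ := exists_nonneg_coeffs_eq_zero_at hc hpos hlam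
  refine mem_iUnion.2 ⟨i₀, mem_hull_range_iff.2 ⟨lam' ∘ i₀.succAbove, fun j => hlam' _, ?_⟩⟩
  rw [← hsum, Fin.sum_univ_succAbove _ i₀, hi₀, zero_smul, zero_add]
  rfl

end FinitelyGenerated

section Closed

variable {E : Type*} [NormedAddCommGroup E] [NormedSpace ℝ E]

lemma isClosed_hull_range_of_linearIndependent {ι : Type*} [Fintype ι] {v : ι → E}
    (hv : LinearIndependent ℝ v) : IsClosed (hull ℝ (range v) : Set E) := by
  have himage : (hull ℝ (range v) : Set E) =
      Fintype.linearCombination ℝ v '' {lam | ∀ i, 0 ≤ lam i} := by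
    ext x
    simp only [SetLike.mem_coe, mem_hull_range_iff, mem_image, Fintype.linearCombination_apply,
      mem_ofPred_eq, eq_comm (a := x)]
  rw [himage]
  refine (LinearMap.isClosedEmbedding_of_injective (LinearMap.ker_eq_bot.2
    (linearIndependent_iff_injective_fintypeLinearCombination.1 hv))).isClosedMap _ ?_
  simp only [ofPred_forall]
  exact isClosed_iInter fun i => isClosed_le continuous_const (continuous_apply i)

lemma isClosed_hull_range {k : ℕ} (v : Fin k → E) :
    IsClosed (hull ℝ (range v) : Set E) := by
  induction k with
  | zero => simp [range_eq_empty]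
  | succ k ih =>
    by_cases hv : LinearIndependent ℝ v
    · exact isClosed_hull_range_of_linearIndependent hv
    · rw [hull_range_eq_iUnion_of_not_linearIndependent hv]
      exact isClosed_iUnion_of_finite fun i => ih _

lemma isClosed_of_fg {C : PointedCone ℝ E} (hC : C.FG) : IsClosed (C : Set E) := by
  obtain ⟨k, v, rfl⟩ := Submodule.fg_iff_exists_fin_generating_family.1 hC
  exact isClosed_hull_range v

end Closed

section Separation

variable {E : Type*} [NormedAddCommGroup E] [InnerProductSpace ℝ E] [CompleteSpace E]
  {C C' : PointedCone ℝ E}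

lemma exists_inner_nonneg_of_fg_of_notMem (hC : C.FG) {b : E} (hb : b ∉ C) :
    ∃ w : E, (∀ x ∈ C, 0 ≤ ⟪x, w⟫) ∧ ⟪b, w⟫ < 0 :=
  ProperCone.hyperplane_separation' ⟨C, isClosed_of_fg hC⟩ hb

lemma IsFaceOf.exists_inner_pos_of_notMem (hF : (C ⊓ C').IsFaceOf C)
    (hC : C.FG) (hC' : C'.FG) {x : E} (hx : x ∈ C) (hx' : x ∉ C') :
    ∃ w : E, (∀ z ∈ C, 0 ≤ ⟪z, w⟫) ∧ (∀ z ∈ C', ⟪z, w⟫ ≤ 0) ∧ 0 < ⟪x, w⟫ := by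
  have hK : x ∉ C' ⊔ C.map (-LinearMap.id) := by
    intro hxK
    obtain ⟨z, hz, _, ⟨a, ha, rfl⟩, hzx⟩ := Submodule.mem_sup.1 hxK
    have hxa : x + a = z := by rw [← hzx]; simp
    have hsum : x + a ∈ C ⊓ C' := ⟨C.add_mem hx ha, hxa ▸ hz⟩
    exact hx' (hF.mem_of_add_mem_left hx ha hsum).2
  obtain ⟨w, hw, hxw⟩ := exists_inner_nonneg_of_fg_of_notMem (hC'.sup (hC.map _)) hK
  refine ⟨-w, fun z hz => ?_, fun z hz => ?_, by simpa using hxw⟩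
  · simpa using hw (-z) (Submodule.mem_sup_right ⟨z, hz, rfl⟩)
  · simpa using hw z (Submodule.mem_sup_left hz)

lemma IsFaceOf.exists_inner_separating {ι : Type*} [Fintype ι] {v : ι → E}
    (hF : (hull ℝ (range v) ⊓ C').IsFaceOf (hull ℝ (range v))) (hC' : C'.FG) :
    ∃ w : E, (∀ i, 0 ≤ ⟪v i, w⟫) ∧ (∀ z ∈ C', ⟪z, w⟫ ≤ 0) ∧ ∀ i, ⟪v i, w⟫ = 0 → v i ∈ C' := by
  have hC : (hull ℝ (range v)).FG := Submodule.fg_span (finite_range v)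
  have hgen : ∀ i, ∃ w : E, (∀ j, 0 ≤ ⟪v j, w⟫) ∧ (∀ z ∈ C', ⟪z, w⟫ ≤ 0) ∧
      (v i ∉ C' → 0 < ⟪v i, w⟫) := by
    intro i
    by_cases hi : v i ∈ C'
    · exact ⟨0, by simp, by simp, absurd hi⟩
    · obtain ⟨w, hwC, hwC', hwi⟩ :=
        hF.exists_inner_pos_of_notMem hC hC' (subset_hull (mem_range_self i)) hi
      exact ⟨w, fun j => hwC _ (subset_hull (mem_range_self j)), hwC', fun _ => hwi⟩
  choose W hWC hWC' hWi using hgen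
  refine ⟨∑ i, W i, fun j => ?_, fun z hz => ?_, fun i hi => ?_⟩
  · rw [inner_sum]
    exact Finset.sum_nonneg fun i _ => hWC i j
  · rw [inner_sum]
    exact Finset.sum_nonpos fun i _ => hWC' i z hz
  · by_contra hvi
    rw [inner_sum, Finset.sum_eq_zero_iff_of_nonneg fun j _ => hWC j i] at hi
    exact (hWi i hvi).ne' (hi i (Finset.mem_univ i))

end Separation

section ErrorBound

variable {E : Type*} [NormedAddCommGroup E] [InnerProductSpace ℝ E]

/-- Dropping the generators on which `w` is positive moves a point of the cone by at most
a constant times `⟪x, w⟫`. -/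
lemma exists_dist_le_inner_of_mem_hull_range {ι : Type*} [Fintype ι] {v : ι → E}
    {w : E} (hw : ∀ i, 0 ≤ ⟪v i, w⟫) :
    ∃ c : ℝ, 0 ≤ c ∧ ∀ x ∈ hull ℝ (range v),
      ∃ x' ∈ hull ℝ {y ∈ range v | ⟪y, w⟫ = 0}, dist x x' ≤ c * ⟪x, w⟫ := by
  classical
  set c := ∑ i, ‖v i‖ / ⟪v i, w⟫
  have hvc : ∀ i, ⟪v i, w⟫ ≠ 0 → ‖v i‖ ≤ c * ⟪v i, w⟫ := fun i hi =>
    (div_le_iff₀ ((hw i).lt_of_ne' hi)).1 <| Finset.single_le_sum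
      (fun j _ => div_nonneg (norm_nonneg _) (hw j)) (Finset.mem_univ i)
  refine ⟨c, Finset.sum_nonneg fun i _ => div_nonneg (norm_nonneg _) (hw i), fun x hx => ?_⟩
  obtain ⟨lam, hlam, rfl⟩ := mem_hull_range_iff.1 hx
  refine ⟨∑ i with ⟪v i, w⟫ = 0, lam i • v i, Submodule.sum_mem _ fun i hi =>
    smul_mem _ (hlam i) (subset_hull ⟨mem_range_self i, (Finset.mem_filter.1 hi).2⟩), ?_⟩
  have hdiff : ∑ i, lam i • v i - ∑ i with ⟪v i, w⟫ = 0, lam i • v i =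
      ∑ i with ¬⟪v i, w⟫ = 0, lam i • v i := by
    rw [← Finset.sum_filter_add_sum_filter_not Finset.univ (⟪v ·, w⟫ = 0), add_sub_cancel_left]
  rw [dist_eq_norm, hdiff]
  calc ‖∑ i with ¬⟪v i, w⟫ = 0, lam i • v i‖
      ≤ ∑ i with ¬⟪v i, w⟫ = 0, ‖lam i • v i‖ := norm_sum_le _ _
    _ ≤ ∑ i with ¬⟪v i, w⟫ = 0, lam i * (c * ⟪v i, w⟫) := Finset.sum_le_sum fun i hi => by
        rw [norm_smul, Real.norm_of_nonneg (hlam i)]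
        exact mul_le_mul_of_nonneg_left (hvc i (Finset.mem_filter.1 hi).2) (hlam i)
    _ ≤ ∑ i, lam i * (c * ⟪v i, w⟫) :=
        Finset.sum_le_sum_of_subset_of_nonneg (Finset.filter_subset _ _) fun i _ hi => by
          simp_all
    _ = c * ⟪∑ i, lam i • v i, w⟫ := by
        simp only [sum_inner, real_inner_smul_left, Finset.mul_sum]
        exact Finset.sum_congr rfl fun i _ => by ring

end ErrorBound

section HoffmanBound

open Metric

variable {E : Type*} [NormedAddCommGroup E] [InnerProductSpace ℝ E] [FiniteDimensional ℝ E]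
  {C C' : PointedCone ℝ E}

lemma IsFaceOf.exists_infDist_inter_le (hF : (C ⊓ C').IsFaceOf C) (hC : C.FG)
    (hC' : C'.FG) : ∃ L : ℝ, ∀ X : E,
      infDist X ((C : Set E) ∩ C') ≤ L * (infDist X (C : Set E) + infDist X (C' : Set E)) := by
  obtain ⟨k, v, rfl⟩ := Submodule.fg_iff_exists_fin_generating_family.1 hC
  obtain ⟨w, hwv, hwC', hwC'_of_eq⟩ := hF.exists_inner_separating hC'
  obtain ⟨c, hc, hc_dist⟩ := exists_dist_le_inner_of_mem_hull_range hwv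
  have hface_le : hull ℝ {y ∈ range v | ⟪y, w⟫ = 0} ≤ hull ℝ (range v) ⊓ C' :=
    Submodule.span_le.2 fun _ ⟨⟨i, hi⟩, hy⟩ =>
      ⟨subset_hull ⟨i, hi⟩, hi ▸ hwC'_of_eq i (hi ▸ hy)⟩
  refine ⟨1 + c * ‖w‖, fun X => ?_⟩
  obtain ⟨x, hx, hXx⟩ := (isClosed_of_fg hC).exists_infDist_eq_dist ⟨0, zero_mem _⟩ X
  obtain ⟨z, hz, hXz⟩ := (isClosed_of_fg hC').exists_infDist_eq_dist ⟨0, zero_mem _⟩ X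
  obtain ⟨x', hx', hxx'⟩ := hc_dist x hx
  have hinner : ⟪x, w⟫ ≤ ‖w‖ * (dist X x + dist X z) :=
    calc ⟪x, w⟫ ≤ ⟪x - z, w⟫ := by rw [inner_sub_left]; linarith [hwC' z hz]
      _ ≤ ‖x - z‖ * ‖w‖ := real_inner_le_norm _ _
      _ ≤ (dist X x + dist X z) * ‖w‖ := by
          rw [← dist_eq_norm]; gcongr; exact dist_triangle_left x z X
      _ = ‖w‖ * (dist X x + dist X z) := mul_comm _ _
  rw [hXx, hXz]
  calc infDist X ((hull ℝ (range v) : Set E) ∩ C') ≤ dist X x' :=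
        infDist_le_dist_of_mem (hface_le hx')
    _ ≤ dist X x + dist x x' := dist_triangle _ _ _
    _ ≤ dist X x + c * (‖w‖ * (dist X x + dist X z)) := by
        gcongr; exact hxx'.trans (mul_le_mul_of_nonneg_left hinner hc)
    _ ≤ (1 + c * ‖w‖) * (dist X x + dist X z) := by
        nlinarith [dist_nonneg (x := X) (y := z)]

end HoffmanBound

end PointedCone

section Fan

open Metric

variable {n : ℕ}

lemma IsPolyhedralCone.exists_fg {C : Set (EuclideanSpace ℝ (Fin n))} (hC : IsPolyhedralCone C) :
    ∃ P : PointedCone ℝ (EuclideanSpace ℝ (Fin n)), P.FG ∧ (P : Set _) = C := by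
  obtain ⟨k, v, rfl⟩ := hC
  refine ⟨PointedCone.hull ℝ (range v), Submodule.fg_span (finite_range v), ?_⟩
  ext x
  exact PointedCone.mem_hull_range_iff

lemma IsFaceOf.pointedCone_isFaceOf {F C : PointedCone ℝ (EuclideanSpace ℝ (Fin n))}
    (h : IsFaceOf (F : Set (EuclideanSpace ℝ (Fin n))) C) : F.IsFaceOf C := by
  rcases h with h | ⟨u, hu, hF⟩
  · rw [SetLike.coe_set_eq.1 h]
  have hFC : (F : Set (EuclideanSpace ℝ (Fin n))) ⊆ C := hF ▸ inter_subset_left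
  refine ⟨hFC, fun {x y a} hx hy ha hxy => ?_⟩
  rw [← SetLike.mem_coe, hF] at hxy ⊢
  have hsum : a * ⟪u, x⟫ + ⟪u, y⟫ = 0 := by
    simpa [inner_add_right, real_inner_smul_right] using hxy.2
  have hux := hu x hx
  have huy := hu y hy
  exact ⟨hx, show ⟪u, x⟫ = 0 by nlinarith⟩

lemma coneDim_lt_of_isFaceOf_of_ne {F C : Set (EuclideanSpace ℝ (Fin n))} (h : IsFaceOf F C)
    (hne : F ≠ C) : coneDim F < coneDim C := by
  obtain ⟨u, -, rfl⟩ := h.resolve_left hne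
  obtain ⟨x, hxC, hxu⟩ : ∃ x ∈ C, ⟪u, x⟫ ≠ 0 := by
    by_contra! h
    exact hne (inter_eq_left.2 fun x hx => h x hx)
  have hker : Submodule.span ℝ (C ∩ {x | ⟪u, x⟫ = 0}) ≤ LinearMap.ker (innerₗ _ u) :=
    Submodule.span_le.2 fun z hz => hz.2
  refine Submodule.finrank_lt_finrank_of_lt (SetLike.lt_iff_le_and_exists.2
    ⟨Submodule.span_mono inter_subset_left, x, Submodule.subset_span hxC, fun hx => hxu ?_⟩)
  simpa using hker hx

lemma IsCompleteFan.exists_infDist_inter_le {𝓕 : Set (Set (EuclideanSpace ℝ (Fin n)))}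
    (h𝓕 : IsCompleteFan 𝓕) : ∃ L : ℝ, 0 ≤ L ∧ ∀ C ∈ 𝓕, ∀ C' ∈ 𝓕, ∀ X,
      infDist X (C ∩ C') ≤ L * (infDist X C + infDist X C') := by
  obtain ⟨hfin, hpoly, -, hface, -⟩ := h𝓕
  have hpair : ∀ p ∈ 𝓕 ×ˢ 𝓕, ∀ᶠ L in Filter.atTop, ∀ X,
      infDist X (p.1 ∩ p.2) ≤ L * (infDist X p.1 + infDist X p.2) := by
    rintro ⟨C, C'⟩ ⟨hC, hC'⟩
    obtain ⟨P, hP, rfl⟩ := (hpoly C hC).exists_fg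
    obtain ⟨P', hP', rfl⟩ := (hpoly C' hC').exists_fg
    have hF : (P ⊓ P').IsFaceOf P := IsFaceOf.pointedCone_isFaceOf (hface _ hC _ hC').1
    obtain ⟨L, hL⟩ := hF.exists_infDist_inter_le hP hP'
    filter_upwards [Filter.eventually_ge_atTop L] with L' hL' X
    exact (hL X).trans (by gcongr; exact add_nonneg infDist_nonneg infDist_nonneg)
  obtain ⟨L, hL, hLpair⟩ :=
    ((Filter.eventually_ge_atTop 0).and ((hfin.prod hfin).eventually_all.2 hpair)).exists
  exact ⟨L, hL, fun C hC C' hC' => hLpair (C, C') ⟨hC, hC'⟩⟩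

lemma qtdiWellDefined_of_infDist_inter_le {𝓕 : Set (Set (EuclideanSpace ℝ (Fin n)))}
    {L : ℝ} {dt : Fin n → ℝ}
    (hface : ∀ C ∈ 𝓕, ∀ C' ∈ 𝓕, IsFaceOf (C ∩ C') C ∧ IsFaceOf (C ∩ C') C') (hL : 0 ≤ L)
    (hbound : ∀ C ∈ 𝓕, ∀ C' ∈ 𝓕, ∀ X,
      infDist X (C ∩ C') ≤ L * (infDist X C + infDist X C'))
    (hdt : ∀ h k m : Fin n, h < k → h < m → L * (dt k + dt m) ≤ dt h) :
    QTDIWellDefined 𝓕 dt := by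
  intro C hC C' hC' X hk hm hXC hXC'
  obtain ⟨hF, hF'⟩ := hface C hC C' hC'
  by_cases hFC : C ∩ C' = C
  · rw [hFC]; exact ⟨hk, hXC⟩
  by_cases hFC' : C ∩ C' = C'
  · rw [hFC']; exact ⟨hm, hXC'⟩
  have hlt := coneDim_lt_of_isFaceOf_of_ne hF hFC
  have hlt' := coneDim_lt_of_isFaceOf_of_ne hF' hFC'
  refine ⟨hlt.trans hk, ?_⟩
  calc infDist X (C ∩ C') ≤ L * (infDist X C + infDist X C') := hbound C hC C' hC' X
    _ ≤ L * (dt ⟨_, hk⟩ + dt ⟨_, hm⟩) := by gcongr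
    _ ≤ _ := hdt _ _ _ (Fin.mk_lt_mk.2 hlt) (Fin.mk_lt_mk.2 hlt')

end Fan

lemma mul_add_le_of_geometric {L D : ℝ} (hL : 0 ≤ L) (hD : 0 ≤ D) {N h k m : ℕ} (hN : h < N)
    (hk : h < k) (hm : h < m) :
    L * (D * (2 * L + 1) ^ (N - k) + D * (2 * L + 1) ^ (N - m)) ≤ D * (2 * L + 1) ^ (N - h) := by
  set q := 2 * L + 1
  have hq : 1 ≤ q := by linarith
  have hqk : q ^ (N - k) ≤ q ^ (N - h - 1) := pow_le_pow_right₀ hq (by omega)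
  have hqm : q ^ (N - m) ≤ q ^ (N - h - 1) := pow_le_pow_right₀ hq (by omega)
  have hqh : q ^ (N - h) = q * q ^ (N - h - 1) := by rw [← pow_succ']; congr 1; omega
  calc L * (D * q ^ (N - k) + D * q ^ (N - m))
      ≤ L * (D * q ^ (N - h - 1) + D * q ^ (N - h - 1)) := by gcongr
    _ = 2 * L * (D * q ^ (N - h - 1)) := by ring
    _ ≤ q * (D * q ^ (N - h - 1)) := by gcongr; linarith
    _ = D * q ^ (N - h) := by rw [hqh]; ring

theorem exists_wellDefined_qtdi_ge_general {n : ℕ}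
    (𝓕 : Set (Set (EuclideanSpace ℝ (Fin n)))) (h𝓕 : IsCompleteFan 𝓕)
    (d : Fin n → ℝ) :
    ∃ dt : Fin n → ℝ, (∀ k, 0 < dt k) ∧ (∀ k, d k ≤ dt k) ∧
      QTDIWellDefined 𝓕 dt := by
  obtain ⟨L, hL, hbound⟩ := h𝓕.exists_infDist_inter_le
  obtain ⟨-, -, -, hface, -⟩ := h𝓕
  obtain ⟨B, hB⟩ := (finite_range d).bddAbove
  set D := max B 1
  have hD : 0 < D := lt_max_of_lt_right one_pos
  refine ⟨fun k => D * (2 * L + 1) ^ (n - k : ℕ), fun k => by positivity, fun k => ?_,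
    qtdiWellDefined_of_infDist_inter_le hface hL hbound
      fun h k m hk hm => mul_add_le_of_geometric hL hD.le h.isLt hk hm⟩
  calc d k ≤ D := (hB (mem_range_self k)).trans (le_max_left _ _)
    _ ≤ D * (2 * L + 1) ^ (n - k : ℕ) :=
        le_mul_of_one_le_right hD.le (one_le_pow₀ (by linarith))

/-- Every positive vector `d` can be enlarged to a positive vector `d̃`
for which the quasi-toric differential inclusion given by `𝓕` and `d̃` is well-defined. -/
theorem exists_wellDefined_qtdi_ge {n : ℕ}
    (𝓕 : Set (Set (EuclideanSpace ℝ (Fin n)))) (h𝓕 : IsCompleteFan 𝓕)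
    (d : Fin n → ℝ) (hd : ∀ k, 0 < d k) :
    ∃ dt : Fin n → ℝ, (∀ k, 0 < dt k) ∧ (∀ k, d k ≤ dt k) ∧
      QTDIWellDefined 𝓕 dt :=
  exists_wellDefined_qtdi_ge_general 𝓕 h𝓕 d
end

section
/- Let 𝓕 be a complete polyhedral fan in ℝ^n, let d = (d_0, d_1, ..., d_{n−1}) ∈ ℝ^n_{>0} be such that the quasi-toric differential inclusion given by 𝓕 and d is well-defined, and set δ = max{d_0, d_1, ..., d_{n−1}}. Then for every X ∈ ℝ^n and every cone C ∈ 𝓕 such that either dim(C) = k ≤ n−1 and dist(X, C) ≤ d_k, or dim(C) = n and X ∈ C, we have C^o ⊆ F_{𝓕,δ}(X); i.e., the quasi-toric differential inclusion given by 𝓕 and d is embedded in the toric differential inclusion given by 𝓕 and δ. -/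
open scoped RealInnerProductSpace

/-- Every well-defined quasi-toric differential inclusion can be embedded
into the toric differential inclusion with `δ = max {d_0, ..., d_{n-1}}`. -/
theorem quasiToric_embeds_into_toric {n : ℕ}
    (𝓕 : Set (Set (EuclideanSpace ℝ (Fin n)))) (h𝓕 : IsCompleteFan 𝓕)
    (d : Fin n → ℝ) (hd : ∀ k, 0 < d k) (hwd : QTDIWellDefined 𝓕 d)
    (δ : ℝ) (hδ : IsGreatest (Set.range d) δ) :
    ∀ X : EuclideanSpace ℝ (Fin n), ∀ C ∈ 𝓕,
      ((∃ hk : coneDim C < n, Metric.infDist X C ≤ d ⟨coneDim C, hk⟩) ∨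
       (coneDim C = n ∧ X ∈ C)) →
      polarCone C ⊆ toricRHS 𝓕 δ X := by
  intro X C hC hcase u hu x hx
  have hdist : Metric.infDist X C ≤ δ := by
    rcases hcase with ⟨hk, h⟩ | ⟨_, hX⟩
    · exact h.trans (hδ.2 ⟨_, rfl⟩)
    · rw [Metric.infDist_zero_of_mem hX]
      obtain ⟨k, hk⟩ := hδ.1
      exact le_of_lt (hk ▸ hd k)
  exact hu x (hx C ⟨hC, hdist⟩)
end
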